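/- arXiv:1911.08143 — 2 statements merged into one kernel-verified Lean document; each statement's English description precedes it below -/
import Mathlib

section
/- Fix N ≥ 1, 0 ≤ m ≤ N²−1, and k ≥ 1 with k ≤ m+1, and set w := N²−m−1. Let λ be a Young diagram with w boxes contained in □_N, and let S, S' ∈ 𝒯_λ. Then the number of Pieri tableaux M ∈ 𝒯̃_{□_N} with W̃'(M) = S equals the number of Pieri tableaux M ∈ 𝒯̃_{□_N} with W̃'(M) = S'. Equivalently, the conditional distribution of W̃'(M) for a uniformly random M ∈ 𝒯̃_{□_N}, given that its shape is λ, is uniform on 𝒯_λ. -/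
/-!
Common framework.

A *cell* `(x, y)` has column `x` and row `y` (0-indexed, French convention, so the
bottom-left corner is `(0, 0)`).  A *filling* assigns to every cell a natural number,
where `0` encodes an empty cell.
-/

abbrev Cell : Type := ℕ × ℕ

abbrev Filling : Type := Cell → ℕ

/-- One sliding step of jeu de taquin: given a filling `F` and the position `h` of the
hole, slide into the hole the smaller of the entries of the boxes directly to the right
of and directly above the hole (of those that exist); the hole moves to the vacated box.
If neither neighbouring box is occupied, nothing happens. -/
def slide (F : Filling) (h : Cell) : Filling × Cell :=
  let r := F (h.1 + 1, h.2)
  let u := F (h.1, h.2 + 1)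
  if r = 0 ∧ u = 0 then (F, h)
  else if u = 0 ∨ (r ≠ 0 ∧ r < u) then
    (fun c => if c = h then r else if c = (h.1 + 1, h.2) then 0 else F c, (h.1 + 1, h.2))
  else
    (fun c => if c = h then u else if c = (h.1, h.2 + 1) then 0 else F c, (h.1, h.2 + 1))

/-- Iterated sliding, with explicit fuel.  The process stops (and the result is stable
under adding more fuel) as soon as no box lies to the right of or above the hole. -/
def slideIter : ℕ → Filling → Cell → Filling × Cell
  | 0, F, h => (F, h)
  | fuel + 1, F, h =>
      if F (h.1 + 1, h.2) = 0 ∧ F (h.1, h.2 + 1) = 0 then (F, h)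
      else slideIter fuel (slide F h).1 (slide F h).2

/-- Jeu de taquin with fuel `n` applied to `F`: erase the entry of the corner box
`(0,0)`, creating a hole there, then slide until no box lies to the right of or above
the hole.  Returns the resulting filling together with the final position of the hole.
For a standard Young tableau with at most `n` boxes, fuel `n` always suffices. -/
def jdtAux (n : ℕ) (F : Filling) : Filling × Cell :=
  slideIter n (fun c => if c = ((0, 0) : Cell) then 0 else F c) (0, 0)

/-- The jeu de taquin transformation `j` (for tableaux with at most `n` boxes). -/
def jdt (n : ℕ) (F : Filling) : Filling := (jdtAux n F).1

/-- The final position of the hole in the jeu de taquin applied to `F`. -/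
def holeEnd (n : ℕ) (F : Filling) : Cell := (jdtAux n F).2

/-- The position of the hole after `s` sliding steps of the jeu de taquin applied
to `F`; the sequence of these positions is the jeu de taquin path of `F`. -/
def holeAt (F : Filling) (s : ℕ) : Cell :=
  (slideIter s (fun c => if c = ((0, 0) : Cell) then 0 else F c) (0, 0)).2

open Classical in
/-- The position `pos F k` of the entry `k` in the filling `F` (junk value if absent). -/
noncomputable def pos (F : Filling) (k : ℕ) : Cell :=
  if h : ∃ c : Cell, F c = k then h.choose else (0, 0)

/-- The content (`u`-coordinate) of the box of `F` containing the entry `k`: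
the column minus the row. -/
noncomputable def content (F : Filling) (k : ℕ) : ℤ :=
  ((pos F k).1 : ℤ) - ((pos F k).2 : ℤ)

/-- `IsStdFilling F a n` : the filling `F` is a standard tableau with entries
`a+1, …, n`: every such entry occurs in exactly one box, there are no other entries,
the occupied boxes form a Young diagram (a lower set), and the entries strictly
increase from left to right along rows and from bottom to top along columns. -/
def IsStdFilling (F : Filling) (a n : ℕ) : Prop :=
  (∀ k : ℕ, a < k → k ≤ n → ∃! c : Cell, F c = k) ∧
  (∀ c : Cell, F c ≤ n ∧ (F c = 0 ∨ a < F c)) ∧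
  (∀ x y : ℕ, F (x + 1, y) ≠ 0 → F (x, y) ≠ 0) ∧
  (∀ x y : ℕ, F (x, y + 1) ≠ 0 → F (x, y) ≠ 0) ∧
  (∀ x y : ℕ, F (x + 1, y) ≠ 0 → F (x, y) < F (x + 1, y)) ∧
  (∀ x y : ℕ, F (x, y + 1) ≠ 0 → F (x, y) < F (x, y + 1))

/-- The shape of a filling: the set of occupied cells. -/
def shape (F : Filling) : Set Cell := {c : Cell | F c ≠ 0}

/-- A finite set of cells is a Young diagram if it is a lower set. -/
def IsYoung (s : Finset Cell) : Prop :=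
  ∀ x y : ℕ, ((x + 1, y) ∈ s → (x, y) ∈ s) ∧ ((x, y + 1) ∈ s → (x, y) ∈ s)

/-- The filling `F` has shape exactly `s`. -/
def HasShape (F : Filling) (s : Finset Cell) : Prop := ∀ c : Cell, c ∈ s ↔ F c ≠ 0

/-- `F ∈ 𝒯_s` : `F` is a standard Young tableau of shape `s`. -/
def IsSYTof (F : Filling) (s : Finset Cell) : Prop :=
  IsStdFilling F 0 s.card ∧ HasShape F s

/-- The square Young diagram `□_N` of side `N`. -/
def squareDiagram (N : ℕ) : Finset Cell := Finset.range N ×ˢ Finset.range N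

/-- `F ∈ 𝒯_{□_N}` : `F` is a standard Young tableau of square shape `□_N`. -/
def IsSquareSYT (N : ℕ) (F : Filling) : Prop := IsSYTof F (squareDiagram N)

/-- The modified jeu de taquin `J` on tableaux with `n` boxes: apply `j`, place a new box
with entry `n+1` at the final position of the hole, then decrease all entries by `1`. -/
def Jmod (n : ℕ) (F : Filling) : Filling :=
  fun c => (if c = holeEnd n F then n + 1 else jdt n F c) - 1

/-- `IsPieri F n k` : the filling `F`, whose `k` largest entries are
`n-k+1, …, n`, is a Pieri tableau with respect to `k`: the contents of the boxes
containing the `k` largest entries are strictly increasing. -/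
noncomputable def IsPieri (F : Filling) (n k : ℕ) : Prop :=
  ∀ p : ℕ, 1 ≤ p → p < k → content F (n - k + p) < content F (n - k + p + 1)

/-- The column into which the value `v` lands when row-inserted into row `y` of `P`
(searching columns `0, …, B`): the first column whose entry is empty or exceeds `v`. -/
def bumpCol (P : Filling) (v y B : ℕ) : ℕ :=
  (((List.range (B + 1)).find? fun x => decide (P (x, y) = 0 ∨ v < P (x, y))).getD B)

/-- Row insertion: insert the value `v` into row `y` of `P`, bumping to higher rows;
returns the new filling and the cell where a new box was created. -/
def insertRow : ℕ → Filling → ℕ → ℕ → ℕ → Filling × Cell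
  | 0, P, _, y, _ => (P, (0, y))
  | fuel + 1, P, v, y, B =>
      let x := bumpCol P v y B
      let w := P (x, y)
      let P' : Filling := fun c => if c = ((x, y) : Cell) then v else P c
      if w = 0 then (P', (x, y)) else insertRow fuel P' w (y + 1) B

/-- One step of the Robinson–Schensted algorithm: insert the value `vi.1` into the
insertion tableau and record the entry `vi.2` in the newly created box of the
recording tableau. -/
def rsStep (B : ℕ) (PQ : Filling × Filling) (vi : ℕ × ℕ) : Filling × Filling :=
  let res := insertRow (B + 1) PQ.1 vi.1 0 B
  (res.1, fun c => if c = res.2 then vi.2 else PQ.2 c)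

/-- The recording tableau `Q(w)` of the Robinson–Schensted row insertion of the
sequence `w`: the entry `i` marks the box created at step `i`. -/
def Qtab (w : List ℕ) : Filling :=
  ((w.zip (List.range' 1 w.length)).foldl (rsStep w.length) (fun _ => 0, fun _ => 0)).2

/-- The lazy parametrization `𝐪_i` of the jeu de taquin path of a tableau `F` with `n`
boxes: the last box along the jeu de taquin path of `F` whose entry in `F` is `≤ i`. -/
def lazyQ (n : ℕ) (F : Filling) (i : ℕ) : Cell :=
  holeAt F (Nat.findGreatest (fun s => F (holeAt F s) ≤ i) n)

/-- The water configuration `W'(T)` in the single surfer scenario: apply `j` to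
`T ∈ 𝒯_{□_N}` `m` times, renumber the entries to `1, …, w+1` (where `w = N²-m-1`)
preserving their order, and remove the box containing the largest entry `w+1`. -/
def waterSingle (N m : ℕ) (T : Filling) : Filling :=
  fun c =>
    if ((jdt (N ^ 2))^[m] T) c - m = N ^ 2 - m then 0
    else ((jdt (N ^ 2))^[m] T) c - m

/-- The water configuration `W̃'(M)` in the multisurfer scenario: apply `j` to
`M ∈ 𝒯̃_{□_N}` `m+1-k` times, renumber the entries to `1, …, w+k` (where
`w = N²-m-1`) preserving their order, and remove the `k` boxes containing the
entries `w+1, …, w+k`. -/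
def waterMulti (N m k : ℕ) (M : Filling) : Filling :=
  fun c =>
    if N ^ 2 - m - 1 < ((jdt (N ^ 2))^[m + 1 - k] M) c - (m + 1 - k) then 0
    else ((jdt (N ^ 2))^[m + 1 - k] M) c - (m + 1 - k)


namespace S10

/-! ### Preliminaries -/

lemma young_dx {mu : Finset Cell} (hY : IsYoung mu) :
    ∀ d x y : ℕ, (x + d, y) ∈ mu → (x, y) ∈ mu := by
  intro d
  induction d with
  | zero => intro x y h; simpa using h
  | succ d ih =>
    intro x y h
    exact ih x y ((hY (x + d) y).1 h)

lemma young_dy {mu : Finset Cell} (hY : IsYoung mu) :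
    ∀ d x y : ℕ, (x, y + d) ∈ mu → (x, y) ∈ mu := by
  intro d
  induction d with
  | zero => intro x y h; simpa using h
  | succ d ih =>
    intro x y h
    exact ih x y ((hY x (y + d)).2 h)

lemma young_le {mu : Finset Cell} (hY : IsYoung mu) {x y x' y' : ℕ}
    (hx : x ≤ x') (hy : y ≤ y') (h : (x', y') ∈ mu) : (x, y) ∈ mu := by
  obtain ⟨d, rfl⟩ := Nat.exists_eq_add_of_le hx
  obtain ⟨e, rfl⟩ := Nat.exists_eq_add_of_le hy
  exact young_dy hY e x y (young_dx hY d x (y + e) h)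

lemma young_card0 {mu : Finset Cell} (hY : IsYoung mu) {x y : ℕ} (h : (x, y) ∈ mu) :
    x + y < mu.card := by
  classical
  have hb : (Finset.range (x + y + 1)).card ≤ mu.card := by
    apply Finset.card_le_card_of_injOn (fun i => if i ≤ x then ((i, 0) : Cell) else (x, i - x))
    · intro i hi
      simp only [Finset.mem_coe, Finset.mem_range] at hi
      by_cases hix : i ≤ x
      · simpa [hix] using young_le hY hix (Nat.zero_le _) h
      · simp only [hix, if_false]
        exact young_le hY le_rfl (by omega) h
    · intro i hi j hj hij
      have hi' : i < x + y + 1 := by simpa using hi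
      have hj' : j < x + y + 1 := by simpa using hj
      simp only at hij
      split_ifs at hij <;> rw [Prod.mk.injEq] at hij <;> omega
  simpa using hb

lemma young_card {mu : Finset Cell} (hY : IsYoung mu) {c : Cell} (h : c ∈ mu) :
    c.1 + c.2 < mu.card :=
  young_card0 hY (show ((c.1, c.2) : Cell) ∈ mu from h)

lemma pos_eq {F : Filling} {v : ℕ} {c : Cell} (hu : ∃! d : Cell, F d = v) (hc : F c = v) :
    pos F v = c := by
  have hex : ∃ d : Cell, F d = v := ⟨c, hc⟩
  rw [pos, dif_pos hex]
  exact hu.unique hex.choose_spec hc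

/-- The invariant of an intermediate configuration of jeu de taquin: a standard
tableau of shape `mu` with entries `a+1, …, n`, with a hole at `h ∈ mu`. -/
structure Inv (mu : Finset Cell) (a n : ℕ) (F : Filling) (h : Cell) : Prop where
  young : IsYoung mu
  hmem : h ∈ mu
  fill : ∀ c : Cell, F c ≠ 0 ↔ (c ∈ mu ∧ c ≠ h)
  uniq : ∀ v : ℕ, a < v → v ≤ n → ∃! c : Cell, F c = v
  rng : ∀ c : Cell, F c = 0 ∨ (a < F c ∧ F c ≤ n)
  mono : ∀ x y x' y' : ℕ, x ≤ x' → y ≤ y' → ((x, y) : Cell) ≠ (x', y') →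
    F (x, y) ≠ 0 → F (x', y') ≠ 0 → F (x, y) < F (x', y')

namespace Inv

variable {mu : Finset Cell} {a n : ℕ} {F : Filling} {h : Cell}

lemma hole (I : Inv mu a n F h) : F h = 0 := by
  by_contra hne
  exact ((I.fill h).1 hne).2 rfl

lemma val_inj (I : Inv mu a n F h) {c c' : Cell} (hc : F c ≠ 0) (hc' : F c' ≠ 0)
    (he : F c = F c') : c = c' := by
  rcases I.rng c with h0 | ⟨h1, h2⟩
  · exact absurd h0 hc
  · exact (I.uniq (F c) h1 h2).unique rfl he.symm

lemma mono' (I : Inv mu a n F h) {c c' : Cell} (hx : c.1 ≤ c'.1) (hy : c.2 ≤ c'.2)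
    (hne : c ≠ c') (h1 : F c ≠ 0) (h2 : F c' ≠ 0) : F c < F c' :=
  I.mono c.1 c.2 c'.1 c'.2 hx hy (by simpa using hne) (by simpa) (by simpa)

end Inv

/-- Move the entry at `src` into the (empty) cell `dst`. -/
def mv (F : Filling) (src dst : Cell) : Filling :=
  fun c => if c = dst then F src else if c = src then 0 else F c

lemma mv_dst {F : Filling} {src dst : Cell} : mv F src dst dst = F src := by
  simp [mv]

lemma mv_src {F : Filling} {src dst : Cell} (hne : src ≠ dst) : mv F src dst src = 0 := by
  simp [mv, hne]

lemma mv_other {F : Filling} {src dst c : Cell} (h1 : c ≠ dst) (h2 : c ≠ src) :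
    mv F src dst c = F c := by
  simp [mv, h1, h2]

lemma mv_inv {mu : Finset Cell} {a n : ℕ} {F : Filling} {h : Cell} (I : Inv mu a n F h)
    {src : Cell} (hne : src ≠ h) (hnz : F src ≠ 0)
    (fitA : ∀ c : Cell, c ∈ mu → c ≠ h → c ≠ src → h.1 ≤ c.1 → h.2 ≤ c.2 → F src < F c)
    (fitB : ∀ c : Cell, c ∈ mu → c ≠ h → c ≠ src → c.1 ≤ h.1 → c.2 ≤ h.2 → F c < F src) :
    Inv mu a n (mv F src h) src := by
  have hsmem : src ∈ mu := ((I.fill src).1 hnz).1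
  refine ⟨I.young, hsmem, ?_, ?_, ?_, ?_⟩
  · intro c
    by_cases hch : c = h
    · rw [hch, mv_dst]
      exact ⟨fun _ => ⟨I.hmem, fun hh => hne hh.symm⟩, fun _ => hnz⟩
    · by_cases hcs : c = src
      · rw [hcs, mv_src hne]
        simp
      · rw [mv_other hch hcs, I.fill c]
        exact ⟨fun hp => ⟨hp.1, hcs⟩, fun hp => ⟨hp.1, hch⟩⟩
  · intro v hv1 hv2
    obtain ⟨c₀, hc₀, huc⟩ := I.uniq v hv1 hv2
    have hvne : v ≠ 0 := by omega
    by_cases hcs : c₀ = src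
    · refine ⟨h, ?_, ?_⟩
      · show mv F src h h = v
        rw [mv_dst, ← hcs]; exact hc₀
      · intro c hc
        by_cases hch : c = h
        · exact hch
        by_cases hcs' : c = src
        · rw [hcs', mv_src hne] at hc
          exact absurd hc.symm hvne
        · rw [mv_other hch hcs'] at hc
          exact absurd ((huc c hc).trans hcs) hcs'
    · have hc₀h : c₀ ≠ h := fun hh => hvne (by rw [← hc₀, hh, I.hole])
      refine ⟨c₀, ?_, ?_⟩
      · show mv F src h c₀ = v
        rw [mv_other hc₀h hcs]; exact hc₀
      · intro c hc
        by_cases hch : c = h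
        · rw [hch, mv_dst] at hc
          exact absurd (huc src hc).symm hcs
        by_cases hcs' : c = src
        · rw [hcs', mv_src hne] at hc
          exact absurd hc.symm hvne
        · rw [mv_other hch hcs'] at hc
          exact huc c hc
  · intro c
    by_cases hch : c = h
    · rw [hch, mv_dst]; exact I.rng src
    · by_cases hcs : c = src
      · rw [hcs, mv_src hne]; left; rfl
      · rw [mv_other hch hcs]; exact I.rng c
  · intro x y x' y' hx hy hne2 h1 h2
    have hcsrc : ((x, y) : Cell) ≠ src := by
      intro hh; rw [hh, mv_src hne] at h1; exact h1 rfl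
    have hcsrc' : ((x', y') : Cell) ≠ src := by
      intro hh; rw [hh, mv_src hne] at h2; exact h2 rfl
    by_cases hch : ((x, y) : Cell) = h
    · have hch' : ((x', y') : Cell) ≠ h := fun hh => hne2 (hch.trans hh.symm)
      rw [hch, mv_dst] at h1 ⊢
      rw [mv_other hch' hcsrc'] at h2 ⊢
      have hmem' : ((x', y') : Cell) ∈ mu := ((I.fill _).1 h2).1
      exact fitA (x', y') hmem' hch' hcsrc' (by rw [← hch]; exact hx) (by rw [← hch]; exact hy)
    · by_cases hch' : ((x', y') : Cell) = h
      · rw [mv_other hch hcsrc] at h1 ⊢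
        rw [hch', mv_dst] at h2 ⊢
        have hmem1 : ((x, y) : Cell) ∈ mu := ((I.fill _).1 h1).1
        exact fitB (x, y) hmem1 hch hcsrc (by rw [← hch']; exact hx) (by rw [← hch']; exact hy)
      · rw [mv_other hch hcsrc] at h1 ⊢
        rw [mv_other hch' hcsrc'] at h2 ⊢
        exact I.mono x y x' y' hx hy hne2 h1 h2


/-! ### Slide steps -/

def Term (F : Filling) (h : Cell) : Prop :=
  F (h.1 + 1, h.2) = 0 ∧ F (h.1, h.2 + 1) = 0

def rslide (F : Filling) : Cell → Filling × Cell
  | (0, 0) => (F, (0, 0))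
  | (x+1, 0) => (mv F (x, 0) (x+1, 0), (x, 0))
  | (0, y+1) => (mv F (0, y) (0, y+1), (0, y))
  | (x+1, y+1) =>
      if F (x+1, y) < F (x, y+1) then (mv F (x, y+1) (x+1, y+1), (x, y+1))
      else (mv F (x+1, y) (x+1, y+1), (x+1, y))

lemma cellne {x y x' y' : ℕ} (h : ¬(x = x' ∧ y = y')) : ((x, y) : Cell) ≠ (x', y') := by
  intro hh; rw [Prod.mk.injEq] at hh; exact h hh

lemma ne_cell {x y x' y' : ℕ} (h : ((x, y) : Cell) ≠ (x', y')) : ¬(x = x' ∧ y = y') := by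
  intro hh; exact h (by rw [Prod.mk.injEq]; exact hh)

lemma Inv.nz {mu : Finset Cell} {a n : ℕ} {F : Filling} {h : Cell}
    (I : Inv mu a n F h) {c : Cell} (h1 : c ∈ mu) (h2 : c ≠ h) : F c ≠ 0 :=
  (I.fill c).2 ⟨h1, h2⟩

lemma mv_cancel {F : Filling} {src dst : Cell} (hne : src ≠ dst) (hdst : F dst = 0) :
    mv (mv F src dst) dst src = F := by
  funext c
  by_cases hcs : c = src
  · rw [hcs, mv_dst, mv_dst]
  · by_cases hcd : c = dst
    · rw [hcd, mv_src (Ne.symm hne), hdst]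
    · rw [mv_other hcs hcd, mv_other hcd hcs]

lemma slide_right {F : Filling} {x y : ℕ}
    (hnt : ¬(F (x+1, y) = 0 ∧ F (x, y+1) = 0))
    (hbr : F (x, y+1) = 0 ∨ (F (x+1, y) ≠ 0 ∧ F (x+1, y) < F (x, y+1))) :
    slide F (x, y) = (mv F (x+1, y) (x, y), (x+1, y)) := by
  have he : slide F (x, y) =
      if F (x+1, y) = 0 ∧ F (x, y+1) = 0 then (F, ((x, y) : Cell))
      else if F (x, y+1) = 0 ∨ (F (x+1, y) ≠ 0 ∧ F (x+1, y) < F (x, y+1)) then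
        (mv F (x+1, y) (x, y), ((x+1, y) : Cell))
      else (mv F (x, y+1) (x, y), ((x, y+1) : Cell)) := rfl
  rw [he, if_neg hnt, if_pos hbr]

lemma slide_up {F : Filling} {x y : ℕ}
    (hnt : ¬(F (x+1, y) = 0 ∧ F (x, y+1) = 0))
    (hbr : ¬(F (x, y+1) = 0 ∨ (F (x+1, y) ≠ 0 ∧ F (x+1, y) < F (x, y+1)))) :
    slide F (x, y) = (mv F (x, y+1) (x, y), (x, y+1)) := by
  have he : slide F (x, y) =
      if F (x+1, y) = 0 ∧ F (x, y+1) = 0 then (F, ((x, y) : Cell))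
      else if F (x, y+1) = 0 ∨ (F (x+1, y) ≠ 0 ∧ F (x+1, y) < F (x, y+1)) then
        (mv F (x+1, y) (x, y), ((x+1, y) : Cell))
      else (mv F (x, y+1) (x, y), ((x, y+1) : Cell)) := rfl
  rw [he, if_neg hnt, if_neg hbr]

lemma inv_slide_right {mu : Finset Cell} {a n : ℕ} {F : Filling} {x y : ℕ}
    (I : Inv mu a n F (x, y)) (hsrc : F (x+1, y) ≠ 0)
    (hguard : F (x, y+1) = 0 ∨ F (x+1, y) < F (x, y+1)) :
    Inv mu a n (mv F (x+1, y) (x, y)) (x+1, y) := by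
  apply mv_inv I (cellne (by omega)) hsrc
  · rintro ⟨cx, cy⟩ hc hch hcs hx hy
    simp only at hx hy
    have hch' := ne_cell hch
    rcases Nat.lt_or_ge cx (x+1) with hlt | hge
    · have hcx : cx = x := by omega
      subst hcx
      have hcy : y + 1 ≤ cy := by omega
      have hmem2 : ((cx, y+1) : Cell) ∈ mu := young_le I.young le_rfl hcy hc
      have hnz2 : F (cx, y+1) ≠ 0 := I.nz hmem2 (cellne (by omega))
      rcases hguard with h0 | hlt2
      · exact absurd h0 hnz2
      · rcases Nat.eq_or_lt_of_le hcy with h' | h'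
        · rw [show ((cx, cy) : Cell) = (cx, y+1) from by rw [h']]
          exact hlt2
        · exact lt_trans hlt2
            (I.mono cx (y+1) cx cy le_rfl (by omega) (cellne (by omega)) hnz2 (I.nz hc hch))
    · exact I.mono (x+1) y cx cy hge hy (Ne.symm hcs) hsrc (I.nz hc hch)
  · rintro ⟨cx, cy⟩ hc hch hcs hx hy
    simp only at hx hy
    exact I.mono cx cy (x+1) y (by omega) hy (cellne (by omega)) (I.nz hc hch) hsrc

lemma inv_slide_up {mu : Finset Cell} {a n : ℕ} {F : Filling} {x y : ℕ}
    (I : Inv mu a n F (x, y)) (hsrc : F (x, y+1) ≠ 0)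
    (hguard : F (x+1, y) = 0 ∨ F (x, y+1) < F (x+1, y)) :
    Inv mu a n (mv F (x, y+1) (x, y)) (x, y+1) := by
  apply mv_inv I (cellne (by omega)) hsrc
  · rintro ⟨cx, cy⟩ hc hch hcs hx hy
    simp only at hx hy
    have hch' := ne_cell hch
    rcases Nat.lt_or_ge cy (y+1) with hlt | hge
    · have hcy : cy = y := by omega
      subst hcy
      have hcx : x + 1 ≤ cx := by omega
      have hmem2 : ((x+1, cy) : Cell) ∈ mu := young_le I.young hcx le_rfl hc
      have hnz2 : F (x+1, cy) ≠ 0 := I.nz hmem2 (cellne (by omega))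
      rcases hguard with h0 | hlt2
      · exact absurd h0 hnz2
      · rcases Nat.eq_or_lt_of_le hcx with h' | h'
        · rw [show ((cx, cy) : Cell) = (x+1, cy) from by rw [h']]
          exact hlt2
        · exact lt_trans hlt2
            (I.mono (x+1) cy cx cy (by omega) le_rfl (cellne (by omega)) hnz2 (I.nz hc hch))
    · exact I.mono x (y+1) cx cy hx hge (Ne.symm hcs) hsrc (I.nz hc hch)
  · rintro ⟨cx, cy⟩ hc hch hcs hx hy
    simp only at hx hy
    exact I.mono cx cy x (y+1) hx (by omega) (cellne (by omega)) (I.nz hc hch) hsrc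

lemma inv_rslide_left {mu : Finset Cell} {a n : ℕ} {F : Filling} {x y : ℕ}
    (I : Inv mu a n F (x+1, y))
    (hguard : ∀ y'' : ℕ, y = y'' + 1 → (F (x+1, y'') = 0 ∨ F (x+1, y'') < F (x, y))) :
    Inv mu a n (mv F (x, y) (x+1, y)) (x, y) := by
  have hsmem : ((x, y) : Cell) ∈ mu := young_le I.young (by omega) le_rfl I.hmem
  have hsrc : F (x, y) ≠ 0 := I.nz hsmem (cellne (by omega))
  apply mv_inv I (cellne (by omega)) hsrc
  · rintro ⟨cx, cy⟩ hc hch hcs hx hy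
    simp only at hx hy
    exact I.mono x y cx cy (by omega) hy (Ne.symm hcs) hsrc (I.nz hc hch)
  · rintro ⟨cx, cy⟩ hc hch hcs hx hy
    simp only at hx hy
    have hch' := ne_cell hch
    have hcs' := ne_cell hcs
    rcases Nat.lt_or_ge cx (x+1) with hlt | hge
    · exact I.mono cx cy x y (by omega) (by omega) (cellne (by omega)) (I.nz hc hch) hsrc
    · -- cx = x+1, cy < y
      have hcx : cx = x + 1 := by omega
      have hcy : cy + 1 ≤ y := by omega
      obtain ⟨y'', rfl⟩ : ∃ y'', y = y'' + 1 := ⟨y - 1, by omega⟩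
      have hmem2 : ((x+1, y'') : Cell) ∈ mu := young_le I.young le_rfl (by omega) I.hmem
      have hnz2 : F (x+1, y'') ≠ 0 := I.nz hmem2 (cellne (by omega))
      rcases hguard y'' rfl with h0 | hlt2
      · exact absurd h0 hnz2
      · rcases Nat.eq_or_lt_of_le hcy with h' | h'
        · rw [show ((cx, cy) : Cell) = (x+1, y'') from by rw [Prod.mk.injEq]; omega]
          exact hlt2
        · exact lt_trans
            (I.mono cx cy (x+1) y'' (by omega) (by omega) (cellne (by omega)) (I.nz hc hch) hnz2) hlt2

lemma inv_rslide_down {mu : Finset Cell} {a n : ℕ} {F : Filling} {x y : ℕ}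
    (I : Inv mu a n F (x, y+1))
    (hguard : ∀ x'' : ℕ, x = x'' + 1 → (F (x'', y+1) = 0 ∨ F (x'', y+1) < F (x, y))) :
    Inv mu a n (mv F (x, y) (x, y+1)) (x, y) := by
  have hsmem : ((x, y) : Cell) ∈ mu := young_le I.young le_rfl (by omega) I.hmem
  have hsrc : F (x, y) ≠ 0 := I.nz hsmem (cellne (by omega))
  apply mv_inv I (cellne (by omega)) hsrc
  · rintro ⟨cx, cy⟩ hc hch hcs hx hy
    simp only at hx hy
    exact I.mono x y cx cy hx (by omega) (Ne.symm hcs) hsrc (I.nz hc hch)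
  · rintro ⟨cx, cy⟩ hc hch hcs hx hy
    simp only at hx hy
    have hch' := ne_cell hch
    have hcs' := ne_cell hcs
    rcases Nat.lt_or_ge cy (y+1) with hlt | hge
    · exact I.mono cx cy x y (by omega) (by omega) (cellne (by omega)) (I.nz hc hch) hsrc
    · have hcy : cy = y + 1 := by omega
      have hcx : cx + 1 ≤ x := by omega
      obtain ⟨x'', rfl⟩ : ∃ x'', x = x'' + 1 := ⟨x - 1, by omega⟩
      have hmem2 : ((x'', y+1) : Cell) ∈ mu := young_le I.young (by omega) le_rfl I.hmem
      have hnz2 : F (x'', y+1) ≠ 0 := I.nz hmem2 (cellne (by omega))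
      rcases hguard x'' rfl with h0 | hlt2
      · exact absurd h0 hnz2
      · rcases Nat.eq_or_lt_of_le hcx with h' | h'
        · rw [show ((cx, cy) : Cell) = (x'', y+1) from by rw [Prod.mk.injEq]; omega]
          exact hlt2
        · exact lt_trans
            (I.mono cx cy x'' (y+1) (by omega) (by omega) (cellne (by omega)) (I.nz hc hch) hnz2) hlt2



/-! ### One-step bundles -/

lemma slide_spec {mu : Finset Cell} {a n : ℕ} {F : Filling} {h : Cell}
    (I : Inv mu a n F h) (hnt : ¬ Term F h) :
    Inv mu a n (slide F h).1 (slide F h).2 ∧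
    (slide F h).2.1 + (slide F h).2.2 = h.1 + h.2 + 1 ∧
    rslide (slide F h).1 (slide F h).2 = (F, h) := by
  obtain ⟨x, y⟩ := h
  have hnt' : ¬(F (x+1, y) = 0 ∧ F (x, y+1) = 0) := hnt
  by_cases hbr : F (x, y+1) = 0 ∨ (F (x+1, y) ≠ 0 ∧ F (x+1, y) < F (x, y+1))
  · -- slide to the right
    have hsrc : F (x+1, y) ≠ 0 := by
      rcases hbr with h0 | ⟨h1, _⟩
      · intro hr; exact hnt ⟨hr, h0⟩
      · exact h1
    have hguard : F (x, y+1) = 0 ∨ F (x+1, y) < F (x, y+1) := by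
      rcases hbr with h0 | ⟨_, h2⟩
      · exact Or.inl h0
      · exact Or.inr h2
    rw [slide_right hnt' hbr]
    refine ⟨inv_slide_right I hsrc hguard, by simp; omega, ?_⟩
    set G := mv F (x+1, y) (x, y) with hG
    have hGdst : G (x, y) = F (x+1, y) := mv_dst
    cases y with
    | zero =>
      show (mv G (x, 0) (x+1, 0), ((x, 0) : Cell)) = (F, (x, 0))
      rw [hG, mv_cancel (cellne (by omega)) I.hole]
    | succ y' =>
      have hcond : G (x+1, y') < G (x, y'+1) := by
        have h1 : G (x, y'+1) = F (x+1, y'+1) := mv_dst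
        have h2 : G (x+1, y') = F (x+1, y') :=
          mv_other (cellne (by omega)) (cellne (by omega))
        rw [h1, h2]
        by_cases h0 : F (x+1, y') = 0
        · rw [h0]; exact Nat.pos_of_ne_zero hsrc
        · exact I.mono (x+1) y' (x+1) (y'+1) le_rfl (by omega) (cellne (by omega)) h0 hsrc
      show rslide G (x+1, y'+1) = (F, (x, y'+1))
      have he : rslide G (x+1, y'+1) =
          if G (x+1, y') < G (x, y'+1) then (mv G (x, y'+1) (x+1, y'+1), ((x, y'+1) : Cell))
          else (mv G (x+1, y') (x+1, y'+1), ((x+1, y') : Cell)) := rfl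
      rw [he, if_pos hcond, hG, mv_cancel (cellne (by omega)) I.hole]
  · -- slide up
    have hu : F (x, y+1) ≠ 0 := by
      intro h0; exact hbr (Or.inl h0)
    have hguard : F (x+1, y) = 0 ∨ F (x, y+1) < F (x+1, y) := by
      by_cases h0 : F (x+1, y) = 0
      · exact Or.inl h0
      · refine Or.inr ?_
        have hle : ¬ F (x+1, y) < F (x, y+1) := fun hh => hbr (Or.inr ⟨h0, hh⟩)
        have hne2 : F (x, y+1) ≠ F (x+1, y) := fun hh =>
          (cellne (show ¬(x = x + 1 ∧ y + 1 = y) by omega)) (I.val_inj hu h0 hh)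
        omega
    rw [slide_up hnt' hbr]
    refine ⟨inv_slide_up I hu hguard, by simp; omega, ?_⟩
    set G := mv F (x, y+1) (x, y) with hG
    cases x with
    | zero =>
      show (mv G (0, y) (0, y+1), ((0, y) : Cell)) = (F, (0, y))
      rw [hG, mv_cancel (cellne (by omega)) I.hole]
    | succ x' =>
      have hcond : ¬ (G (x'+1, y) < G (x', y+1)) := by
        have h1 : G (x'+1, y) = F (x'+1, y+1) := mv_dst
        have h2 : G (x', y+1) = F (x', y+1) :=
          mv_other (cellne (by omega)) (cellne (by omega))
        rw [h1, h2]
        by_cases h0 : F (x', y+1) = 0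
        · rw [h0]; omega
        · have := I.mono x' (y+1) (x'+1) (y+1) (by omega) le_rfl (cellne (by omega)) h0 hu
          omega
      show rslide G (x'+1, y+1) = (F, (x'+1, y))
      have he : rslide G (x'+1, y+1) =
          if G (x'+1, y) < G (x', y+1) then (mv G (x', y+1) (x'+1, y+1), ((x', y+1) : Cell))
          else (mv G (x'+1, y) (x'+1, y+1), ((x'+1, y) : Cell)) := rfl
      rw [he, if_neg hcond, hG, mv_cancel (cellne (by omega)) I.hole]

lemma rslide_spec {mu : Finset Cell} {a n : ℕ} {F : Filling} {h : Cell}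
    (I : Inv mu a n F h) (hne : h ≠ ((0, 0) : Cell)) :
    Inv mu a n (rslide F h).1 (rslide F h).2 ∧
    (rslide F h).2.1 + (rslide F h).2.2 + 1 = h.1 + h.2 ∧
    ¬ Term (rslide F h).1 (rslide F h).2 ∧
    slide (rslide F h).1 (rslide F h).2 = (F, h) := by
  obtain ⟨x, y⟩ := h
  match x, y with
  | 0, 0 => exact absurd rfl hne
  | x+1, 0 =>
    show Inv mu a n (mv F (x, 0) (x+1, 0)) (x, 0) ∧ _ ∧
      ¬ Term (mv F (x, 0) (x+1, 0)) (x, 0) ∧ slide (mv F (x, 0) (x+1, 0)) (x, 0) = (F, (x+1, 0))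
    set G := mv F (x, 0) (x+1, 0) with hG
    have hval : G (x+1, 0) = F (x, 0) := mv_dst
    have hsrc : F (x, 0) ≠ 0 :=
      I.nz (young_le I.young (by omega) le_rfl I.hmem) (cellne (by omega))
    have hnt : ¬ Term G (x, 0) := by
      intro ⟨h1, h2⟩
      rw [show ((x, 0).1 + 1, (x, 0).2) = ((x+1, 0) : Cell) from rfl, hval] at h1
      exact hsrc h1
    refine ⟨inv_rslide_left I (by omega), by show x + 0 + 1 = x + 1 + 0; omega, hnt, ?_⟩
    have hbr : G (x, 0+1) = 0 ∨ (G (x+1, 0) ≠ 0 ∧ G (x+1, 0) < G (x, 0+1)) := by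
      by_cases h0 : G (x, 1) = 0
      · exact Or.inl h0
      · refine Or.inr ⟨by rw [hval]; exact hsrc, ?_⟩
        have h2 : G (x, 1) = F (x, 1) := mv_other (cellne (by omega)) (cellne (by omega))
        rw [hval, h2]
        rw [h2] at h0
        exact I.mono x 0 x 1 le_rfl (by omega) (cellne (by omega)) hsrc h0
    have hnt2 : ¬(G (x+1, 0) = 0 ∧ G (x, 0+1) = 0) := by
      intro ⟨h1, _⟩; rw [hval] at h1; exact hsrc h1
    rw [slide_right hnt2 hbr, hG, mv_cancel (cellne (by omega)) I.hole]
  | 0, y+1 =>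
    show Inv mu a n (mv F (0, y) (0, y+1)) (0, y) ∧ _ ∧
      ¬ Term (mv F (0, y) (0, y+1)) (0, y) ∧ slide (mv F (0, y) (0, y+1)) (0, y) = (F, (0, y+1))
    set G := mv F (0, y) (0, y+1) with hG
    have hval : G (0, y+1) = F (0, y) := mv_dst
    have hsrc : F (0, y) ≠ 0 :=
      I.nz (young_le I.young le_rfl (by omega) I.hmem) (cellne (by omega))
    have hnt : ¬ Term G (0, y) := by
      intro ⟨h1, h2⟩
      rw [show (((0:ℕ), y).1, (0, y).2 + 1) = ((0, y+1) : Cell) from rfl, hval] at h2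
      exact hsrc h2
    refine ⟨inv_rslide_down I (by omega), by show 0 + y + 1 = 0 + (y + 1); omega, hnt, ?_⟩
    have hbr : ¬(G (0, y+1) = 0 ∨ (G (0+1, y) ≠ 0 ∧ G (0+1, y) < G (0, y+1))) := by
      rintro (h0 | ⟨h1, h2⟩)
      · rw [hval] at h0; exact hsrc h0
      · have h3 : G (1, y) = F (1, y) := mv_other (cellne (by omega)) (cellne (by omega))
        rw [hval] at h2
        rw [h3] at h1 h2
        have := I.mono 0 y 1 y (by omega) le_rfl (cellne (by omega)) hsrc h1
        omega
    have hnt2 : ¬(G (0+1, y) = 0 ∧ G (0, y+1) = 0) := by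
      intro ⟨_, h2⟩; rw [hval] at h2; exact hsrc h2
    rw [slide_up hnt2 hbr, hG, mv_cancel (cellne (by omega)) I.hole]
  | x+1, y+1 =>
    have hl : F (x, y+1) ≠ 0 :=
      I.nz (young_le I.young (by omega) le_rfl I.hmem) (cellne (by omega))
    have hd : F (x+1, y) ≠ 0 :=
      I.nz (young_le I.young le_rfl (by omega) I.hmem) (cellne (by omega))
    have hld : F (x+1, y) ≠ F (x, y+1) := fun hh =>
      (cellne (show ¬(x + 1 = x ∧ y = y + 1) by omega)) (I.val_inj hd hl hh)
    have he : rslide F (x+1, y+1) =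
        if F (x+1, y) < F (x, y+1) then (mv F (x, y+1) (x+1, y+1), ((x, y+1) : Cell))
        else (mv F (x+1, y) (x+1, y+1), ((x+1, y) : Cell)) := rfl
    by_cases hc : F (x+1, y) < F (x, y+1)
    · rw [he, if_pos hc]
      set G := mv F (x, y+1) (x+1, y+1) with hG
      have hval : G (x+1, y+1) = F (x, y+1) := mv_dst
      have hnt : ¬ Term G (x, y+1) := by
        intro ⟨h1, h2⟩
        rw [show ((x, y+1).1 + 1, (x, y+1).2) = ((x+1, y+1) : Cell) from rfl, hval] at h1
        exact hl h1
      refine ⟨inv_rslide_left I (fun y'' hy'' => ?_), by simp; omega, hnt, ?_⟩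
      · rw [show y'' = y from by omega]; exact Or.inr hc
      · have hbr : G (x, y+1+1) = 0 ∨ (G (x+1, y+1) ≠ 0 ∧ G (x+1, y+1) < G (x, y+1+1)) := by
          by_cases h0 : G (x, y+2) = 0
          · exact Or.inl h0
          · refine Or.inr ⟨by rw [hval]; exact hl, ?_⟩
            have h2 : G (x, y+2) = F (x, y+2) := mv_other (cellne (by omega)) (cellne (by omega))
            rw [hval, h2]
            rw [h2] at h0
            exact I.mono x (y+1) x (y+2) le_rfl (by omega) (cellne (by omega)) hl h0
        have hnt2 : ¬(G (x+1, y+1) = 0 ∧ G (x, y+1+1) = 0) := by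
          intro ⟨h1, _⟩; rw [hval] at h1; exact hl h1
        rw [slide_right hnt2 hbr, hG, mv_cancel (cellne (by omega)) I.hole]
    · rw [he, if_neg hc]
      set G := mv F (x+1, y) (x+1, y+1) with hG
      have hval : G (x+1, y+1) = F (x+1, y) := mv_dst
      have hnt : ¬ Term G (x+1, y) := by
        intro ⟨h1, h2⟩
        rw [show ((x+1, y).1, (x+1, y).2 + 1) = ((x+1, y+1) : Cell) from rfl, hval] at h2
        exact hd h2
      refine ⟨inv_rslide_down I (fun x'' hx'' => ?_), by simp; omega, hnt, ?_⟩
      · rw [show x'' = x from by omega]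
        refine Or.inr ?_
        omega
      · have hbr : ¬(G (x+1, y+1) = 0 ∨ (G (x+1+1, y) ≠ 0 ∧ G (x+1+1, y) < G (x+1, y+1))) := by
          rintro (h0 | ⟨h1, h2⟩)
          · rw [hval] at h0; exact hd h0
          · have h3 : G (x+2, y) = F (x+2, y) := mv_other (cellne (by omega)) (cellne (by omega))
            rw [hval] at h2
            rw [h3] at h1 h2
            have := I.mono (x+1) y (x+2) y (by omega) le_rfl (cellne (by omega)) hd h1
            omega
        have hnt2 : ¬(G (x+1+1, y) = 0 ∧ G (x+1, y+1) = 0) := by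
          intro ⟨_, h2⟩; rw [hval] at h2; exact hd h2
        rw [slide_up hnt2 hbr, hG, mv_cancel (cellne (by omega)) I.hole]



/-! ### Contents -/

lemma content_eq {F : Filling} {v : ℕ} {c : Cell} (hu : ∃! d : Cell, F d = v) (hc : F c = v) :
    content F v = (c.1 : ℤ) - c.2 := by rw [content, pos_eq hu hc]

lemma content_ne {mu : Finset Cell} {a n : ℕ} {F : Filling} {h : Cell}
    (I : Inv mu a n F h) {e : ℕ} {c c' : Cell}
    (hc : F c = e) (hc' : F c' = e + 1) (hene : e ≠ 0) :
    (c.1 : ℤ) - c.2 ≠ (c'.1 : ℤ) - c'.2 := by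
  obtain ⟨cx, cy⟩ := c
  obtain ⟨cx', cy'⟩ := c'
  simp only
  intro heq
  have hnzc : F (cx, cy) ≠ 0 := by rw [hc]; exact hene
  have hnzc' : F (cx', cy') ≠ 0 := by rw [hc']; omega
  have hmemc' : ((cx', cy') : Cell) ∈ mu := ((I.fill _).1 hnzc').1
  rcases lt_trichotomy cx cx' with hlt | heqx | hgt
  · have hylt : cy < cy' := by omega
    have key : ∀ z : Cell, z ≠ h → cx ≤ z.1 → cy ≤ z.2 → z ≠ ((cx, cy) : Cell) →
        z.1 ≤ cx' → z.2 ≤ cy' → z ≠ ((cx', cy') : Cell) → False := by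
      rintro ⟨zx, zy⟩ hzh hz1 hz2 hzc hz3 hz4 hzc'
      simp only at hz1 hz2 hz3 hz4
      have hzmem : ((zx, zy) : Cell) ∈ mu := young_le I.young hz3 hz4 hmemc'
      have hznz : F (zx, zy) ≠ 0 := I.nz hzmem hzh
      have h1 : F (cx, cy) < F (zx, zy) := I.mono cx cy zx zy hz1 hz2 (Ne.symm hzc) hnzc hznz
      have h2 : F (zx, zy) < F (cx', cy') := I.mono zx zy cx' cy' hz3 hz4 hzc' hznz hnzc'
      omega
    by_cases hz : ((cx + 1, cy) : Cell) = h
    · exact key (cx, cy + 1) (by rw [← hz]; exact cellne (by omega)) le_rfl (by omega)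
        (cellne (by omega)) (by simp; omega) (by simp; omega) (cellne (by omega))
    · exact key (cx + 1, cy) hz (by simp) le_rfl
        (cellne (by omega)) (by simp; omega) (by simp; omega) (cellne (by omega))
  · have : cy = cy' := by omega
    subst this
    have : cx = cx' := heqx
    subst this
    rw [hc] at hc'
    omega
  · have hygt : cy' < cy := by omega
    have := I.mono cx' cy' cx cy (by omega) (by omega) (cellne (by omega)) hnzc' hnzc
    omega

lemma content_mv {mu : Finset Cell} {a n : ℕ} {F : Filling} {h src : Cell}
    (I : Inv mu a n F h) (I' : Inv mu a n (mv F src h) src)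
    (hadj : ((src.1 : ℤ) - src.2) - ((h.1 : ℤ) - h.2) = 1 ∨
            ((src.1 : ℤ) - src.2) - ((h.1 : ℤ) - h.2) = -1)
    {e : ℕ} (he : a < e) (hen : e + 1 ≤ n) :
    (content (mv F src h) e < content (mv F src h) (e+1) ↔ content F e < content F (e+1)) := by
  have hne : src ≠ h := by rintro rfl; rcases hadj with hh | hh <;> omega
  have hene : e ≠ 0 := by omega
  obtain ⟨ce, hce, _⟩ := I.uniq e he (by omega)
  obtain ⟨ce1, hce1, _⟩ := I.uniq (e+1) (by omega) hen
  have hcee : content F e = (ce.1 : ℤ) - ce.2 := content_eq (I.uniq e he (by omega)) hce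
  have hce1e : content F (e+1) = (ce1.1 : ℤ) - ce1.2 :=
    content_eq (I.uniq (e+1) (by omega) hen) hce1
  have hne_old : (ce.1 : ℤ) - ce.2 ≠ (ce1.1 : ℤ) - ce1.2 := content_ne I hce hce1 hene
  have hceh : ce ≠ h := fun hh => by rw [hh, I.hole] at hce; omega
  have hce1h : ce1 ≠ h := fun hh => by rw [hh, I.hole] at hce1; omega
  by_cases h1 : ce = src
  · have h2 : ce1 ≠ src := fun hh => by rw [← h1] at hh; rw [hh, hce] at hce1; omega
    have hmv : mv F src h h = e := by rw [mv_dst, ← h1]; exact hce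
    have hmv1 : mv F src h ce1 = e + 1 := by rw [mv_other hce1h h2]; exact hce1
    have hc'e : content (mv F src h) e = (h.1 : ℤ) - h.2 :=
      content_eq (I'.uniq e he (by omega)) hmv
    have hc'e1 : content (mv F src h) (e+1) = (ce1.1 : ℤ) - ce1.2 :=
      content_eq (I'.uniq (e+1) (by omega) hen) hmv1
    have hne_new : (h.1 : ℤ) - h.2 ≠ (ce1.1 : ℤ) - ce1.2 := content_ne I' hmv hmv1 hene
    have e1 : (ce.1 : ℤ) = src.1 := by rw [h1]
    have e2 : (ce.2 : ℤ) = src.2 := by rw [h1]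
    rw [hc'e, hc'e1, hcee, hce1e]
    rcases hadj with hh | hh <;> constructor <;> intro hlt <;> omega
  · by_cases h2 : ce1 = src
    · have hmv : mv F src h ce = e := by rw [mv_other hceh h1]; exact hce
      have hmv1 : mv F src h h = e + 1 := by rw [mv_dst, ← h2]; exact hce1
      have hc'e : content (mv F src h) e = (ce.1 : ℤ) - ce.2 :=
        content_eq (I'.uniq e he (by omega)) hmv
      have hc'e1 : content (mv F src h) (e+1) = (h.1 : ℤ) - h.2 :=
        content_eq (I'.uniq (e+1) (by omega) hen) hmv1
      have hne_new : (ce.1 : ℤ) - ce.2 ≠ (h.1 : ℤ) - h.2 := content_ne I' hmv hmv1 hene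
      have e1 : (ce1.1 : ℤ) = src.1 := by rw [h2]
      have e2 : (ce1.2 : ℤ) = src.2 := by rw [h2]
      rw [hc'e, hc'e1, hcee, hce1e]
      rcases hadj with hh | hh <;> constructor <;> intro hlt <;> omega
    · have hmv : mv F src h ce = e := by rw [mv_other hceh h1]; exact hce
      have hmv1 : mv F src h ce1 = e + 1 := by rw [mv_other hce1h h2]; exact hce1
      have hc'e : content (mv F src h) e = (ce.1 : ℤ) - ce.2 :=
        content_eq (I'.uniq e he (by omega)) hmv
      have hc'e1 : content (mv F src h) (e+1) = (ce1.1 : ℤ) - ce1.2 :=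
        content_eq (I'.uniq (e+1) (by omega) hen) hmv1
      rw [hc'e, hc'e1, hcee, hce1e]



/-! ### Iterated slides -/

def rIter : ℕ → Filling → Cell → Filling × Cell
  | 0, F, h => (F, h)
  | fuel+1, F, h => if h = ((0, 0) : Cell) then (F, h) else rIter fuel (rslide F h).1 (rslide F h).2

def revJdt (n v : ℕ) (G : Filling) (c : Cell) : Filling :=
  fun d => if d = ((0, 0) : Cell) then v else (rIter n G c).1 d

lemma slideIter_of_term {F : Filling} {h : Cell} (hT : Term F h) (fuel : ℕ) :
    slideIter fuel F h = (F, h) := by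
  cases fuel with
  | zero => rfl
  | succ fuel => exact if_pos hT

lemma slideIter_step {F : Filling} {h : Cell} (hnt : ¬ Term F h) (fuel : ℕ) :
    slideIter (fuel+1) F h = slideIter fuel (slide F h).1 (slide F h).2 :=
  if_neg hnt

lemma rIter_idle {F : Filling} (fuel : ℕ) : rIter fuel F (0, 0) = (F, (0, 0)) := by
  cases fuel with
  | zero => rfl
  | succ fuel => exact if_pos rfl

lemma rIter_step {F : Filling} {h : Cell} (hne : h ≠ ((0, 0) : Cell)) (fuel : ℕ) :
    rIter (fuel+1) F h = rIter fuel (rslide F h).1 (rslide F h).2 :=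
  if_neg hne

lemma content_slide' {mu : Finset Cell} {a n : ℕ} {F : Filling} {h : Cell}
    (I : Inv mu a n F h) (hnt : ¬ Term F h) {e : ℕ} (he : a < e) (hen : e + 1 ≤ n) :
    (content (slide F h).1 e < content (slide F h).1 (e+1) ↔ content F e < content F (e+1)) := by
  obtain ⟨x, y⟩ := h
  have hnt' : ¬(F (x+1, y) = 0 ∧ F (x, y+1) = 0) := hnt
  by_cases hbr : F (x, y+1) = 0 ∨ (F (x+1, y) ≠ 0 ∧ F (x+1, y) < F (x, y+1))
  · have hsrc : F (x+1, y) ≠ 0 := by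
      rcases hbr with h0 | ⟨h1, _⟩
      · intro hr; exact hnt ⟨hr, h0⟩
      · exact h1
    have hguard : F (x, y+1) = 0 ∨ F (x+1, y) < F (x, y+1) := by
      rcases hbr with h0 | ⟨_, h2⟩
      exacts [Or.inl h0, Or.inr h2]
    rw [slide_right hnt' hbr]
    exact content_mv I (inv_slide_right I hsrc hguard) (Or.inl (by push_cast; ring)) he hen
  · have hu : F (x, y+1) ≠ 0 := fun h0 => hbr (Or.inl h0)
    have hguard : F (x+1, y) = 0 ∨ F (x, y+1) < F (x+1, y) := by
      by_cases h0 : F (x+1, y) = 0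
      · exact Or.inl h0
      · have hle : ¬ F (x+1, y) < F (x, y+1) := fun hh => hbr (Or.inr ⟨h0, hh⟩)
        have hne2 : F (x, y+1) ≠ F (x+1, y) := fun hh =>
          (cellne (show ¬(x = x + 1 ∧ y + 1 = y) by omega)) (I.val_inj hu h0 hh)
        exact Or.inr (by omega)
    rw [slide_up hnt' hbr]
    exact content_mv I (inv_slide_up I hu hguard) (Or.inr (by push_cast; ring)) he hen

lemma content_rslide {mu : Finset Cell} {a n : ℕ} {F : Filling} {h : Cell}
    (I : Inv mu a n F h) (hne : h ≠ ((0, 0) : Cell)) {e : ℕ} (he : a < e) (hen : e + 1 ≤ n) :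
    (content (rslide F h).1 e < content (rslide F h).1 (e+1) ↔ content F e < content F (e+1)) := by
  obtain ⟨I1, hsum, hnt1, hsl⟩ := rslide_spec I hne
  have hc := content_slide' I1 hnt1 he hen
  rw [hsl] at hc
  exact hc.symm

lemma fwd {mu : Finset Cell} {a n : ℕ} : ∀ fuel {F : Filling} {h : Cell},
    Inv mu a n F h → mu.card ≤ fuel + h.1 + h.2 + 1 →
    Inv mu a n (slideIter fuel F h).1 (slideIter fuel F h).2 ∧
    Term (slideIter fuel F h).1 (slideIter fuel F h).2 ∧
    (∃ kk : ℕ, (slideIter fuel F h).2.1 + (slideIter fuel F h).2.2 = h.1 + h.2 + kk ∧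
      ∀ X : ℕ, rIter (kk + X) (slideIter fuel F h).1 (slideIter fuel F h).2 = rIter X F h) ∧
    (∀ e, a < e → e + 1 ≤ n →
      (content (slideIter fuel F h).1 e < content (slideIter fuel F h).1 (e+1) ↔
       content F e < content F (e+1))) := by
  intro fuel
  induction fuel with
  | zero =>
    intro F h I hcard
    have hT : Term F h := by
      constructor
      · by_contra hr
        have hmem : ((h.1 + 1, h.2) : Cell) ∈ mu := ((I.fill _).1 hr).1
        have := young_card I.young hmem
        omega
      · by_contra hr
        have hmem : ((h.1, h.2 + 1) : Cell) ∈ mu := ((I.fill _).1 hr).1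
        have := young_card I.young hmem
        omega
    exact ⟨I, hT, ⟨0, by show h.1 + h.2 = h.1 + h.2 + 0; omega,
      fun X => by rw [Nat.zero_add]; rfl⟩, fun e he hen => Iff.rfl⟩
  | succ fuel ih =>
    intro F h I hcard
    by_cases hT : Term F h
    · rw [slideIter_of_term hT]
      exact ⟨I, hT, ⟨0, by show h.1 + h.2 = h.1 + h.2 + 0; omega,
        fun X => by rw [Nat.zero_add]⟩, fun e he hen => Iff.rfl⟩
    · rw [slideIter_step hT]
      obtain ⟨I1, hsum1, hrsl⟩ := slide_spec I hT
      have hcard1 : mu.card ≤ fuel + (slide F h).2.1 + (slide F h).2.2 + 1 := by omega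
      obtain ⟨I', hT', ⟨kk, hkk, hR⟩, hC⟩ := ih I1 hcard1
      have hne01 : (slide F h).2 ≠ ((0, 0) : Cell) := by
        intro hh
        rw [hh] at hsum1
        simp at hsum1
      refine ⟨I', hT', ⟨kk + 1, by omega, fun X => ?_⟩,
        fun e he hen => (hC e he hen).trans (content_slide' I hT he hen)⟩
      rw [show kk + 1 + X = kk + (X + 1) from by omega, hR (X + 1), rIter_step hne01, hrsl]

lemma bwd {mu : Finset Cell} {a n : ℕ} : ∀ s {F : Filling} {h : Cell},
    Inv mu a n F h → h.1 + h.2 = s →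
    ∃ F₀ : Filling,
      (∀ fuel, s ≤ fuel → rIter fuel F h = (F₀, (0, 0))) ∧
      Inv mu a n F₀ (0, 0) ∧
      (∀ X, slideIter (s + X) F₀ (0, 0) = slideIter X F h) ∧
      (∀ e, a < e → e + 1 ≤ n →
        (content F₀ e < content F₀ (e+1) ↔ content F e < content F (e+1))) := by
  intro s
  induction s with
  | zero =>
    intro F h I hs
    obtain ⟨hx, hy⟩ := h
    have h1 : hx = 0 := by omega
    have h2 : hy = 0 := by omega
    subst h1; subst h2
    exact ⟨F, fun fuel _ => rIter_idle fuel, I, fun X => by rw [Nat.zero_add],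
      fun _ _ _ => Iff.rfl⟩
  | succ s ih =>
    intro F h I hs
    have hne : h ≠ ((0, 0) : Cell) := by
      intro hh
      rw [hh] at hs
      simp at hs
    obtain ⟨I1, hsum, hnt1, hsl⟩ := rslide_spec I hne
    obtain ⟨F₀, hrt, I₀, hsi, hC⟩ := ih I1 (by omega)
    refine ⟨F₀, ?_, I₀, ?_, fun e he hen => (hC e he hen).trans (content_rslide I hne he hen)⟩
    · intro fuel hfuel
      obtain ⟨fuel', rfl⟩ : ∃ f', fuel = f' + 1 := ⟨fuel - 1, by omega⟩
      rw [rIter_step hne, hrt fuel' (by omega)]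
    · intro X
      rw [show s + 1 + X = s + (X + 1) from by omega, hsi (X + 1), slideIter_step hnt1, hsl]



/-! ### Standard fillings -/

structure Std (mu : Finset Cell) (a n : ℕ) (F : Filling) : Prop where
  std : IsStdFilling F a n
  shape : HasShape F mu
  young : IsYoung mu
  card : mu.card = n - a

namespace Std

variable {mu : Finset Cell} {a n : ℕ} {F : Filling}

lemma nz_right (hS : Std mu a n F) : ∀ d x y : ℕ, F (x + d, y) ≠ 0 → F (x, y) ≠ 0 := by
  intro d
  induction d with
  | zero => intro x y h; exact h
  | succ d ih => intro x y h; exact ih x y (hS.std.2.2.1 (x + d) y h)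

lemma nz_up (hS : Std mu a n F) : ∀ d x y : ℕ, F (x, y + d) ≠ 0 → F (x, y) ≠ 0 := by
  intro d
  induction d with
  | zero => intro x y h; exact h
  | succ d ih => intro x y h; exact ih x y (hS.std.2.2.2.1 x (y + d) h)

lemma mono_right (hS : Std mu a n F) : ∀ d x y : ℕ, F (x + d, y) ≠ 0 → 0 < d →
    F (x, y) < F (x + d, y) := by
  intro d
  induction d with
  | zero => intro x y _ h0; omega
  | succ d ih =>
    intro x y h hd
    have hstep : F (x + d, y) < F (x + d + 1, y) := hS.std.2.2.2.2.1 (x + d) y h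
    rcases Nat.eq_zero_or_pos d with h0 | h0
    · subst h0; simpa using hstep
    · exact lt_trans (ih x y (hS.std.2.2.1 (x + d) y h) h0) hstep

lemma mono_up (hS : Std mu a n F) : ∀ d x y : ℕ, F (x, y + d) ≠ 0 → 0 < d →
    F (x, y) < F (x, y + d) := by
  intro d
  induction d with
  | zero => intro x y _ h0; omega
  | succ d ih =>
    intro x y h hd
    have hstep : F (x, y + d) < F (x, y + d + 1) := hS.std.2.2.2.2.2 x (y + d) h
    rcases Nat.eq_zero_or_pos d with h0 | h0
    · subst h0; simpa using hstep
    · exact lt_trans (ih x y (hS.std.2.2.2.1 x (y + d) h) h0) hstep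

lemma gmono (hS : Std mu a n F) {x y x' y' : ℕ} (hx : x ≤ x') (hy : y ≤ y')
    (hne : ¬(x = x' ∧ y = y')) (hnz : F (x', y') ≠ 0) : F (x, y) < F (x', y') := by
  obtain ⟨d, rfl⟩ := Nat.exists_eq_add_of_le hx
  obtain ⟨e, rfl⟩ := Nat.exists_eq_add_of_le hy
  rcases Nat.eq_zero_or_pos d with hd | hd
  · subst hd
    rcases Nat.eq_zero_or_pos e with he | he
    · exact absurd ⟨by omega, by omega⟩ hne
    · simpa using hS.mono_up e x y (by simpa using hnz) he
  · rcases Nat.eq_zero_or_pos e with he | he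
    · subst he
      simpa using hS.mono_right d x y (by simpa using hnz) hd
    · have h1 : F (x + d, y) ≠ 0 := hS.nz_up e (x + d) y hnz
      exact lt_trans (hS.mono_right d x y h1 hd) (hS.mono_up e (x + d) y hnz he)

end Std

lemma std_corner {mu : Finset Cell} {a n : ℕ} {F : Filling} (hS : Std mu a n F)
    (han : a < n) : F (0, 0) = a + 1 := by
  obtain ⟨c₀, hc₀, _⟩ := hS.std.1 (a + 1) (by omega) (by omega)
  have hc₀nz : F c₀ ≠ 0 := by rw [hc₀]; omega
  have hc₀mem : c₀ ∈ mu := (hS.shape c₀).2 hc₀nz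
  obtain ⟨cx, cy⟩ := c₀
  by_cases h : ((0, 0) : Cell) = (cx, cy)
  · rw [h]; exact hc₀
  · have hlt : F (0, 0) < F (cx, cy) :=
      hS.gmono (Nat.zero_le _) (Nat.zero_le _) (ne_cell h) hc₀nz
    have hr := (hS.std.2.1 (0, 0)).2
    have h00nz : F (0, 0) ≠ 0 :=
      (hS.shape _).1 (young_le hS.young (Nat.zero_le _) (Nat.zero_le _) hc₀mem)
    rw [hc₀] at hlt
    omega

lemma std_erase_inv {mu : Finset Cell} {a n : ℕ} {F : Filling} (hS : Std mu a n F)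
    (han : a < n) :
    Inv mu (a + 1) n (fun c => if c = ((0, 0) : Cell) then 0 else F c) (0, 0) := by
  have h00 : F (0, 0) = a + 1 := std_corner hS han
  have hmem : ((0, 0) : Cell) ∈ mu := (hS.shape _).2 (by rw [h00]; omega)
  refine ⟨hS.young, hmem, ?_, ?_, ?_, ?_⟩
  · intro c
    by_cases hc : c = ((0, 0) : Cell)
    · rw [if_pos hc]
      simp [hc]
    · rw [if_neg hc]
      rw [← hS.shape c]
      exact ⟨fun h => ⟨h, hc⟩, fun h => h.1⟩
  · intro v hv1 hv2
    obtain ⟨c₀, hc₀, huc⟩ := hS.std.1 v (by omega) hv2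
    have hc₀0 : c₀ ≠ ((0, 0) : Cell) := by
      intro hh; rw [hh, h00] at hc₀; omega
    have hmain : (if c₀ = ((0,0) : Cell) then 0 else F c₀) = v := by
      rw [if_neg hc₀0]; exact hc₀
    refine ⟨c₀, hmain, ?_⟩
    intro c hc
    by_cases hcc : c = ((0, 0) : Cell)
    · rw [if_pos hcc] at hc; omega
    · rw [if_neg hcc] at hc; exact huc c hc
  · intro c
    by_cases hc : c = ((0, 0) : Cell)
    · rw [if_pos hc]; left; rfl
    · rw [if_neg hc]
      rcases (hS.std.2.1 c).2 with h0 | hgt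
      · left; exact h0
      · right
        refine ⟨?_, (hS.std.2.1 c).1⟩
        rcases Nat.eq_or_lt_of_le (Nat.succ_le_of_lt hgt) with he | hlt
        · exfalso
          exact hc ((hS.std.1 (a + 1) (by omega) (by omega)).unique he.symm h00)
        · omega
  · intro x y x' y' hx hy hne2 h1 h2
    by_cases hc1 : ((x, y) : Cell) = (0, 0)
    · rw [if_pos hc1] at h1; exact absurd rfl h1
    · by_cases hc2 : ((x', y') : Cell) = (0, 0)
      · rw [if_pos hc2] at h2; exact absurd rfl h2
      · rw [if_neg hc1] at h1 ⊢
        rw [if_neg hc2] at h2 ⊢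
        exact hS.gmono hx hy (ne_cell hne2) h2

lemma inv_term_std {mu : Finset Cell} {A n : ℕ} {F : Filling} {h : Cell}
    (I : Inv mu A n F h) (hT : Term F h) (hcard : (mu.erase h).card = n - A) :
    Std (mu.erase h) A n F := by
  have key3 : ∀ x y : ℕ, F (x + 1, y) ≠ 0 → F (x, y) ≠ 0 := by
    intro x y hnz
    obtain ⟨hm, hn'⟩ := (I.fill _).1 hnz
    have hmem : ((x, y) : Cell) ∈ mu := young_le I.young (by omega) le_rfl hm
    by_cases hh : ((x, y) : Cell) = h
    · exfalso
      apply hnz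
      have : ((x + 1, y) : Cell) = (h.1 + 1, h.2) := by rw [← hh]
      rw [this]
      exact hT.1
    · exact I.nz hmem hh
  have key4 : ∀ x y : ℕ, F (x, y + 1) ≠ 0 → F (x, y) ≠ 0 := by
    intro x y hnz
    obtain ⟨hm, hn'⟩ := (I.fill _).1 hnz
    have hmem : ((x, y) : Cell) ∈ mu := young_le I.young le_rfl (by omega) hm
    by_cases hh : ((x, y) : Cell) = h
    · exfalso
      apply hnz
      have : ((x, y + 1) : Cell) = (h.1, h.2 + 1) := by rw [← hh]
      rw [this]
      exact hT.2
    · exact I.nz hmem hh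
  refine ⟨⟨I.uniq, ?_, key3, key4, ?_, ?_⟩, ?_, ?_, hcard⟩
  · intro c
    rcases I.rng c with h0 | ⟨h1, h2⟩
    · rw [h0]; exact ⟨Nat.zero_le _, Or.inl rfl⟩
    · exact ⟨h2, Or.inr h1⟩
  · intro x y hnz
    exact I.mono x y (x + 1) y (by omega) le_rfl (cellne (by omega)) (key3 x y hnz) hnz
  · intro x y hnz
    exact I.mono x y x (y + 1) le_rfl (by omega) (cellne (by omega)) (key4 x y hnz) hnz
  · intro c
    rw [Finset.mem_erase, I.fill c]
    exact ⟨fun hp => ⟨hp.2, hp.1⟩, fun hp => ⟨hp.2, hp.1⟩⟩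
  · intro x y
    constructor
    · intro hmem
      rw [Finset.mem_erase] at hmem ⊢
      obtain ⟨hne', hm⟩ := hmem
      have hm' : ((x, y) : Cell) ∈ mu := young_le I.young (by omega) le_rfl hm
      refine ⟨?_, hm'⟩
      intro hh
      have hrt : ((x + 1, y) : Cell) = (h.1 + 1, h.2) := by rw [← hh]
      exact (I.nz hm hne') (by rw [hrt]; exact hT.1)
    · intro hmem
      rw [Finset.mem_erase] at hmem ⊢
      obtain ⟨hne', hm⟩ := hmem
      have hm' : ((x, y) : Cell) ∈ mu := young_le I.young le_rfl (by omega) hm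
      refine ⟨?_, hm'⟩
      intro hh
      have hrt : ((x, y + 1) : Cell) = (h.1, h.2 + 1) := by rw [← hh]
      exact (I.nz hm hne') (by rw [hrt]; exact hT.2)



/-! ### The jeu de taquin and its inverse on standard fillings -/

lemma jdt_spec {mu : Finset Cell} {a n : ℕ} {F : Filling} (hS : Std mu a n F) (han : a < n) :
    holeEnd n F ∈ mu ∧
    Std (mu.erase (holeEnd n F)) (a + 1) n (jdt n F) ∧
    revJdt n (a + 1) (jdt n F) (holeEnd n F) = F ∧
    (∀ e, a + 1 < e → e + 1 ≤ n →
      (content (jdt n F) e < content (jdt n F) (e + 1) ↔ content F e < content F (e + 1))) := by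
  have hE := std_erase_inv hS han
  have hcard : mu.card ≤ n + ((0, 0) : Cell).1 + ((0, 0) : Cell).2 + 1 := by
    have := hS.card; simp; omega
  obtain ⟨I', hT', ⟨kk, hkk, hR⟩, hC⟩ := fwd n hE hcard
  set E : Filling := fun c => if c = ((0, 0) : Cell) then 0 else F c with hEdef
  have hjdt : jdt n F = (slideIter n E (0, 0)).1 := rfl
  have hhole : holeEnd n F = (slideIter n E (0, 0)).2 := rfl
  rw [hjdt, hhole]
  have hkk' : (slideIter n E (0, 0)).2.1 + (slideIter n E (0, 0)).2.2 = kk := by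
    simpa using hkk
  have hkn : kk ≤ n := by
    have hsum := young_card I'.young I'.hmem
    have := hS.card
    omega
  have hrIter : rIter n (slideIter n E (0, 0)).1 (slideIter n E (0, 0)).2 = (E, (0, 0)) := by
    have h1 := hR (n - kk)
    rw [rIter_idle] at h1
    have h2 : kk + (n - kk) = n := by omega
    rw [h2] at h1
    exact h1
  have h00 : F (0, 0) = a + 1 := std_corner hS han
  have hEpos : ∀ e : ℕ, a + 1 < e → e ≤ n → content E e = content F e := by
    intro e he hen
    obtain ⟨c₀, hc₀, _⟩ := hS.std.1 e (by omega) hen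
    have hc₀0 : c₀ ≠ ((0, 0) : Cell) := by
      intro hh; rw [hh, h00] at hc₀; omega
    have hcE : E c₀ = e := by rw [hEdef]; simp only [if_neg hc₀0]; exact hc₀
    rw [content_eq (hE.uniq e he hen) hcE, content_eq (hS.std.1 e (by omega) hen) hc₀]
  refine ⟨I'.hmem, ?_, ?_, ?_⟩
  · apply inv_term_std I' hT'
    rw [Finset.card_erase_of_mem I'.hmem, hS.card]
    omega
  · funext d
    rw [revJdt]
    by_cases hd : d = ((0, 0) : Cell)
    · rw [if_pos hd, hd, h00]
    · rw [if_neg hd, hrIter]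
      show E d = F d
      rw [hEdef]
      simp only [if_neg hd]
  · intro e he hen
    have h := hC e (by omega) hen
    rw [hEpos e he (by omega), hEpos (e + 1) (by omega) hen] at h
    exact h

lemma rev_spec {nu : Finset Cell} {a n : ℕ} {G : Filling} {c : Cell}
    (hG : Std nu (a + 1) n G) (hc : c ∉ nu) (hY : IsYoung (insert c nu)) (han : a < n) :
    Std (insert c nu) a n (revJdt n (a + 1) G c) ∧
    jdt n (revJdt n (a + 1) G c) = G ∧
    holeEnd n (revJdt n (a + 1) G c) = c ∧
    revJdt n (a + 1) G c (0, 0) = a + 1 ∧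
    (∀ e, a + 1 < e → e + 1 ≤ n →
      (content (revJdt n (a + 1) G c) e < content (revJdt n (a + 1) G c) (e + 1) ↔
        content G e < content G (e + 1))) := by
  have hcmem : c ∈ insert c nu := Finset.mem_insert_self c nu
  have hins : (insert c nu).card = n - a := by
    rw [Finset.card_insert_of_notMem hc, hG.card]
    omega
  have I : Inv (insert c nu) (a + 1) n G c := by
    refine ⟨hY, hcmem, ?_, hG.std.1, ?_, ?_⟩
    · intro d
      rw [← hG.shape d]
      constructor
      · intro hd
        exact ⟨Finset.mem_insert_of_mem hd, fun hh => hc (hh ▸ hd)⟩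
      · rintro ⟨hd, hdc⟩
        rcases Finset.mem_insert.1 hd with h1 | h1
        · exact absurd h1 hdc
        · exact h1
    · intro d
      rcases (hG.std.2.1 d).2 with h0 | h1
      · left; exact h0
      · right; exact ⟨h1, (hG.std.2.1 d).1⟩
    · intro x y x' y' hx hy hne2 h1 h2
      exact hG.gmono hx hy (ne_cell hne2) h2
  have hTerm : Term G c := by
    constructor
    · by_contra hnz
      have : ((c.1 + 1, c.2) : Cell) ∈ nu := (hG.shape _).2 hnz
      exact hc (by have := (hG.young c.1 c.2).1 this; simpa using this)
    · by_contra hnz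
      have : ((c.1, c.2 + 1) : Cell) ∈ nu := (hG.shape _).2 hnz
      exact hc (by have := (hG.young c.1 c.2).2 this; simpa using this)
  obtain ⟨F₀, hrt, I₀, hsi, hC⟩ := bwd (c.1 + c.2) I rfl
  have hsn : c.1 + c.2 ≤ n := by
    have := young_card hY hcmem
    omega
  have hR0 : (rIter n G c).1 = F₀ := by rw [hrt n hsn]
  set R : Filling := revJdt n (a + 1) G c with hRdef
  have hRd : ∀ d : Cell, d ≠ ((0, 0) : Cell) → R d = F₀ d := by
    intro d hd
    rw [hRdef, revJdt, if_neg hd, hR0]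
  have hR00 : R (0, 0) = a + 1 := by rw [hRdef, revJdt, if_pos rfl]
  have h00mem : ((0, 0) : Cell) ∈ insert c nu :=
    young_le hY (Nat.zero_le _) (Nat.zero_le _) hcmem
  have hF₀rng : ∀ d : Cell, F₀ d = 0 ∨ (a + 1 < F₀ d ∧ F₀ d ≤ n) := I₀.rng
  -- standardness of R
  have hstdR : Std (insert c nu) a n R := by
    have key3 : ∀ x y : ℕ, R (x + 1, y) ≠ 0 → R (x, y) ≠ 0 := by
      intro x y hnz
      by_cases h0 : ((x, y) : Cell) = (0, 0)
      · rw [h0, hR00]; omega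
      · rw [hRd _ (by intro hh; rw [Prod.mk.injEq] at hh; omega)] at hnz
        rw [hRd _ h0]
        obtain ⟨hm, _⟩ := (I₀.fill _).1 hnz
        exact I₀.nz (young_le I₀.young (by omega) le_rfl hm) h0
    have key4 : ∀ x y : ℕ, R (x, y + 1) ≠ 0 → R (x, y) ≠ 0 := by
      intro x y hnz
      by_cases h0 : ((x, y) : Cell) = (0, 0)
      · rw [h0, hR00]; omega
      · rw [hRd _ (by intro hh; rw [Prod.mk.injEq] at hh; omega)] at hnz
        rw [hRd _ h0]
        obtain ⟨hm, _⟩ := (I₀.fill _).1 hnz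
        exact I₀.nz (young_le I₀.young le_rfl (by omega) hm) h0
    refine ⟨⟨?_, ?_, key3, key4, ?_, ?_⟩, ?_, hY, hins⟩
    · intro v hv1 hv2
      rcases Nat.eq_or_lt_of_le (Nat.succ_le_of_lt hv1) with he | hlt
      · have hmain : R (0, 0) = v := by rw [hR00, ← he]
        refine ⟨(0, 0), hmain, ?_⟩
        intro d hd
        have hd' : R d = v := hd
        by_cases h0 : d = ((0, 0) : Cell)
        · exact h0
        · rw [hRd d h0] at hd'
          rcases hF₀rng d with hh | hh <;> omega
      · obtain ⟨c₀, hc₀, huc⟩ := I₀.uniq v (by omega) hv2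
        have hc₀0 : c₀ ≠ ((0, 0) : Cell) := by
          intro hh; rw [hh, I₀.hole] at hc₀; omega
        have hmain : R c₀ = v := by rw [hRd c₀ hc₀0]; exact hc₀
        refine ⟨c₀, hmain, ?_⟩
        intro d hd
        have hd' : R d = v := hd
        by_cases h0 : d = ((0, 0) : Cell)
        · rw [h0, hR00] at hd'; omega
        · rw [hRd d h0] at hd'; exact huc d hd'
    · intro d
      by_cases h0 : d = ((0, 0) : Cell)
      · rw [h0, hR00]; exact ⟨by omega, Or.inr (by omega)⟩
      · rw [hRd d h0]
        rcases hF₀rng d with hh | hh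
        · rw [hh]; exact ⟨Nat.zero_le _, Or.inl rfl⟩
        · exact ⟨hh.2, Or.inr (by omega)⟩
    · intro x y hnz
      have hx1 : ((x + 1, y) : Cell) ≠ (0, 0) := by
        intro hh; rw [Prod.mk.injEq] at hh; omega
      rw [hRd _ hx1] at hnz ⊢
      by_cases h0 : ((x, y) : Cell) = (0, 0)
      · rw [h0, hR00]
        rcases hF₀rng (x + 1, y) with hh | hh <;> omega
      · rw [hRd _ h0]
        have h1 : F₀ (x, y) ≠ 0 := by
          obtain ⟨hm, _⟩ := (I₀.fill _).1 hnz
          exact I₀.nz (young_le I₀.young (by omega) le_rfl hm) h0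
        exact I₀.mono x y (x + 1) y (by omega) le_rfl (cellne (by omega)) h1 hnz
    · intro x y hnz
      have hx1 : ((x, y + 1) : Cell) ≠ (0, 0) := by
        intro hh; rw [Prod.mk.injEq] at hh; omega
      rw [hRd _ hx1] at hnz ⊢
      by_cases h0 : ((x, y) : Cell) = (0, 0)
      · rw [h0, hR00]
        rcases hF₀rng (x, y + 1) with hh | hh <;> omega
      · rw [hRd _ h0]
        have h1 : F₀ (x, y) ≠ 0 := by
          obtain ⟨hm, _⟩ := (I₀.fill _).1 hnz
          exact I₀.nz (young_le I₀.young le_rfl (by omega) hm) h0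
        exact I₀.mono x y x (y + 1) le_rfl (by omega) (cellne (by omega)) h1 hnz
    · intro d
      by_cases h0 : d = ((0, 0) : Cell)
      · rw [h0]
        constructor
        · intro _; rw [hR00]; omega
        · intro _; exact h00mem
      · rw [hRd d h0, I₀.fill d]
        exact ⟨fun hm => ⟨hm, h0⟩, fun hm => hm.1⟩
  -- jdt of R
  have hER : (fun d => if d = ((0, 0) : Cell) then 0 else R d) = F₀ := by
    funext d
    by_cases h0 : d = ((0, 0) : Cell)
    · rw [if_pos h0, h0, I₀.hole]
    · rw [if_neg h0, hRd d h0]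
  have hslide : slideIter n F₀ (0, 0) = (G, c) := by
    have h1 := hsi (n - (c.1 + c.2))
    rw [show c.1 + c.2 + (n - (c.1 + c.2)) = n from by omega] at h1
    rw [h1, slideIter_of_term hTerm]
  have hjdtaux : jdtAux n R = (G, c) := by
    rw [jdtAux, hER, hslide]
  refine ⟨hstdR, ?_, ?_, hR00, ?_⟩
  · rw [jdt, hjdtaux]
  · rw [holeEnd, hjdtaux]
  · intro e he hen
    have hRC : ∀ v : ℕ, a + 1 < v → v ≤ n → content R v = content F₀ v := by
      intro v hv1 hv2
      obtain ⟨c₀, hc₀, _⟩ := I₀.uniq v (by omega) hv2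
      have hc₀0 : c₀ ≠ ((0, 0) : Cell) := by
        intro hh; rw [hh, I₀.hole] at hc₀; omega
      have hcR : R c₀ = v := by rw [hRd c₀ hc₀0]; exact hc₀
      rw [content_eq (hstdR.std.1 v (by omega) hv2) hcR,
        content_eq (I₀.uniq v (by omega) hv2) hc₀]
    rw [hRC e he (by omega), hRC (e + 1) (by omega) hen]
    exact hC e (by omega) hen



/-! ### Replacing the water configuration -/

def rw' (t w : ℕ) (S' G : Filling) : Filling :=
  fun c => if 0 < G c ∧ G c ≤ t + w then S' c + t else G c

lemma rw'_apply {t w : ℕ} {S' G : Filling} {c : Cell} :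
    rw' t w S' G c = if 0 < G c ∧ G c ≤ t + w then S' c + t else G c := rfl

lemma phi_base {mu lam : Finset Cell} {t w n : ℕ} {S S' G : Filling}
    (hS : IsSYTof S lam) (hS' : IsSYTof S' lam) (hcl : lam.card = w) (hw : 1 ≤ w)
    (htwn : t + w ≤ n) (hG : Std mu t n G)
    (hWE : ∀ c, (if w < G c - t then 0 else G c - t) = S c) :
    Std mu t n (rw' t w S' G) ∧
    (∀ c, (if w < rw' t w S' G c - t then 0 else rw' t w S' G c - t) = S' c) ∧
    rw' t w S (rw' t w S' G) = G ∧
    (∀ e, t + w < e → e ≤ n → content (rw' t w S' G) e = content G e) := by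
  have hSstd : IsStdFilling S 0 w := hcl ▸ hS.1
  have hS'std : IsStdFilling S' 0 w := hcl ▸ hS'.1
  have hGrng := hG.std.2.1
  have F1 : ∀ c : Cell, c ∈ lam ↔ (0 < G c ∧ G c ≤ t + w) := by
    intro c
    have hwe := hWE c
    constructor
    · intro hmem
      have hSnz : S c ≠ 0 := (hS.2 c).1 hmem
      by_cases hcond : w < G c - t
      · rw [if_pos hcond] at hwe
        exact absurd hwe.symm hSnz
      · rw [if_neg hcond] at hwe
        rcases (hGrng c).2 with h0 | h1
        · exfalso; apply hSnz; omega
        · constructor <;> omega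
    · rintro ⟨hpos, hle⟩
      have h1 : t < G c := by
        rcases (hGrng c).2 with h0 | h1
        · omega
        · exact h1
      rw [if_neg (by omega : ¬ w < G c - t)] at hwe
      exact (hS.2 c).2 (by omega)
  have F2 : ∀ c ∈ lam, G c = S c + t := by
    intro c hmem
    have hwe := hWE c
    have hmm := (F1 c).1 hmem
    have h1 : t < G c := by
      rcases (hGrng c).2 with h0 | h1
      · omega
      · exact h1
    rw [if_neg (by omega : ¬ w < G c - t)] at hwe
    omega
  have Foff : ∀ c : Cell, c ∉ lam → G c = 0 ∨ (t + w < G c ∧ G c ≤ n) := by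
    intro c hmem
    by_cases h0 : G c = 0
    · exact Or.inl h0
    · right
      have hnl : ¬(0 < G c ∧ G c ≤ t + w) := fun hh => hmem ((F1 c).2 hh)
      refine ⟨?_, (hGrng c).1⟩
      by_contra hle
      exact hnl ⟨by omega, by omega⟩
  have hS'le : ∀ c : Cell, S' c ≤ w := fun c => (hS'std.2.1 c).1
  have hS'pos : ∀ c ∈ lam, 1 ≤ S' c := by
    intro c hc
    have := (hS'.2 c).1 hc
    omega
  have hS'0 : ∀ c : Cell, c ∉ lam → S' c = 0 := by
    intro c hc
    by_contra hne
    exact hc ((hS'.2 c).2 hne)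
  have hRWlam : ∀ c ∈ lam, rw' t w S' G c = S' c + t := by
    intro c hc
    rw [rw'_apply, if_pos ((F1 c).1 hc)]
  have hRWoff : ∀ c : Cell, c ∉ lam → rw' t w S' G c = G c := by
    intro c hc
    rw [rw'_apply, if_neg (fun hh => hc ((F1 c).2 hh))]
  have hshape : ∀ c : Cell, rw' t w S' G c ≠ 0 ↔ G c ≠ 0 := by
    intro c
    by_cases hc : c ∈ lam
    · rw [hRWlam c hc]
      have h1 := hS'pos c hc
      have h2 := (F1 c).1 hc
      constructor <;> intro <;> omega
    · rw [hRWoff c hc]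
  have hstdRW : Std mu t n (rw' t w S' G) := by
    have key3 : ∀ x y : ℕ, rw' t w S' G (x + 1, y) ≠ 0 → rw' t w S' G (x, y) ≠ 0 := by
      intro x y hnz
      rw [hshape] at hnz ⊢
      exact hG.std.2.2.1 x y hnz
    have key4 : ∀ x y : ℕ, rw' t w S' G (x, y + 1) ≠ 0 → rw' t w S' G (x, y) ≠ 0 := by
      intro x y hnz
      rw [hshape] at hnz ⊢
      exact hG.std.2.2.2.1 x y hnz
    have memcase : ∀ x y : ℕ, ((x + 1, y) : Cell) ∈ lam → ((x, y) : Cell) ∈ lam := by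
      intro x y hmem
      have h2 := (F1 _).1 hmem
      have hnz : G (x, y) ≠ 0 := hG.std.2.2.1 x y (by omega)
      have hlt : G (x, y) < G (x + 1, y) := hG.std.2.2.2.2.1 x y (by omega)
      exact (F1 _).2 ⟨by omega, by omega⟩
    have memcase' : ∀ x y : ℕ, ((x, y + 1) : Cell) ∈ lam → ((x, y) : Cell) ∈ lam := by
      intro x y hmem
      have h2 := (F1 _).1 hmem
      have hnz : G (x, y) ≠ 0 := hG.std.2.2.2.1 x y (by omega)
      have hlt : G (x, y) < G (x, y + 1) := hG.std.2.2.2.2.2 x y (by omega)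
      exact (F1 _).2 ⟨by omega, by omega⟩
    refine ⟨⟨?_, ?_, key3, key4, ?_, ?_⟩, ?_, hG.young, hG.card⟩
    · intro v hv1 hv2
      by_cases hv : v ≤ t + w
      · obtain ⟨c₀, hc₀, huc⟩ := hS'std.1 (v - t) (by omega) (by omega)
        have hc₀mem : c₀ ∈ lam := (hS'.2 c₀).2 (by omega)
        have hmain : rw' t w S' G c₀ = v := by rw [hRWlam c₀ hc₀mem]; omega
        refine ⟨c₀, hmain, ?_⟩
        intro d hd
        have hd' : rw' t w S' G d = v := hd
        by_cases hdm : d ∈ lam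
        · rw [hRWlam d hdm] at hd'
          exact huc d (by omega)
        · rw [hRWoff d hdm] at hd'
          rcases Foff d hdm with h0 | h1 <;> omega
      · obtain ⟨c₀, hc₀, huc⟩ := hG.std.1 v (by omega) hv2
        have hc₀mem : c₀ ∉ lam := by
          intro hmem
          have := (F1 c₀).1 hmem
          omega
        have hmain : rw' t w S' G c₀ = v := by rw [hRWoff c₀ hc₀mem]; exact hc₀
        refine ⟨c₀, hmain, ?_⟩
        intro d hd
        have hd' : rw' t w S' G d = v := hd
        by_cases hdm : d ∈ lam
        · rw [hRWlam d hdm] at hd'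
          have := hS'le d
          omega
        · rw [hRWoff d hdm] at hd'
          exact huc d hd'
    · intro c
      by_cases hc : c ∈ lam
      · rw [hRWlam c hc]
        have h1 := hS'pos c hc
        have h2 := hS'le c
        exact ⟨by omega, Or.inr (by omega)⟩
      · rw [hRWoff c hc]
        exact hGrng c
    · intro x y hnz
      have hnzG : G (x + 1, y) ≠ 0 := (hshape _).1 hnz
      have hnzG' : G (x, y) ≠ 0 := hG.std.2.2.1 x y hnzG
      have hltG : G (x, y) < G (x + 1, y) := hG.std.2.2.2.2.1 x y hnzG
      by_cases hc2 : ((x + 1, y) : Cell) ∈ lam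
      · have hc1 : ((x, y) : Cell) ∈ lam := memcase x y hc2
        rw [hRWlam _ hc1, hRWlam _ hc2]
        have := hS'std.2.2.2.2.1 x y (by
          have := hS'pos _ hc2; omega)
        omega
      · by_cases hc1 : ((x, y) : Cell) ∈ lam
        · rw [hRWlam _ hc1, hRWoff _ hc2]
          have h1 := hS'le (x, y)
          rcases Foff _ hc2 with h0 | h2 <;> omega
        · rw [hRWoff _ hc1, hRWoff _ hc2]
          exact hltG
    · intro x y hnz
      have hnzG : G (x, y + 1) ≠ 0 := (hshape _).1 hnz
      have hnzG' : G (x, y) ≠ 0 := hG.std.2.2.2.1 x y hnzG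
      have hltG : G (x, y) < G (x, y + 1) := hG.std.2.2.2.2.2 x y hnzG
      by_cases hc2 : ((x, y + 1) : Cell) ∈ lam
      · have hc1 : ((x, y) : Cell) ∈ lam := memcase' x y hc2
        rw [hRWlam _ hc1, hRWlam _ hc2]
        have := hS'std.2.2.2.2.2 x y (by
          have := hS'pos _ hc2; omega)
        omega
      · by_cases hc1 : ((x, y) : Cell) ∈ lam
        · rw [hRWlam _ hc1, hRWoff _ hc2]
          have h1 := hS'le (x, y)
          rcases Foff _ hc2 with h0 | h2 <;> omega
        · rw [hRWoff _ hc1, hRWoff _ hc2]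
          exact hltG
    · intro c
      rw [hG.shape c]
      exact (hshape c).symm
  refine ⟨hstdRW, ?_, ?_, ?_⟩
  · intro c
    by_cases hc : c ∈ lam
    · rw [hRWlam c hc]
      have h2 := hS'le c
      rw [if_neg (by omega : ¬ w < S' c + t - t)]
      omega
    · rw [hRWoff c hc]
      rw [hS'0 c hc]
      rcases Foff c hc with h0 | h1
      · rw [h0, if_neg (by omega)]
        omega
      · rw [if_pos (by omega)]
  · funext c
    by_cases hc : c ∈ lam
    · rw [rw'_apply, hRWlam c hc]
      have h1 := hS'pos c hc
      have h2 := hS'le c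
      rw [if_pos ⟨by omega, by omega⟩, ← F2 c hc]
    · rw [rw'_apply, hRWoff c hc]
      rw [if_neg (fun hh => hc ((F1 c).2 hh))]
  · intro e he hen
    obtain ⟨c₀, hc₀, _⟩ := hG.std.1 e (by omega) hen
    have hc₀mem : c₀ ∉ lam := by
      intro hmem
      have := (F1 c₀).1 hmem
      omega
    have hcR : rw' t w S' G c₀ = e := by rw [hRWoff c₀ hc₀mem]; exact hc₀
    rw [content_eq (hstdRW.std.1 e (by omega) hen) hcR,
      content_eq (hG.std.1 e (by omega) hen) hc₀]



/-! ### The bijection -/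

def PhiF (n t w : ℕ) (S' : Filling) : ℕ → Filling → Filling
  | 0, G => rw' t w S' G
  | i+1, G => revJdt n (G (0, 0)) (PhiF n t w S' i (jdt n G)) (holeEnd n G)

lemma phi_spec {n t w k : ℕ} {lam : Finset Cell} {S S' : Filling}
    (hS : IsSYTof S lam) (hS' : IsSYTof S' lam) (hcl : lam.card = w) (hw : 1 ≤ w)
    (htwk : t + w + k = n) (hk : 1 ≤ k) :
    ∀ i a, a + i = t → ∀ {mu : Finset Cell} {G : Filling}, Std mu a n G →
      (∀ c, (if w < ((jdt n)^[i] G) c - t then 0 else ((jdt n)^[i] G) c - t) = S c) →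
      Std mu a n (PhiF n t w S' i G) ∧
      (∀ c, (if w < ((jdt n)^[i] (PhiF n t w S' i G)) c - t then 0
          else ((jdt n)^[i] (PhiF n t w S' i G)) c - t) = S' c) ∧
      PhiF n t w S i (PhiF n t w S' i G) = G ∧
      (∀ e, t + w < e → e + 1 ≤ n →
        (content (PhiF n t w S' i G) e < content (PhiF n t w S' i G) (e + 1) ↔
          content G e < content G (e + 1))) := by
  intro i
  induction i with
  | zero =>
    intro a ha mu G hG hWE
    have hat : a = t := by omega
    subst hat
    simp only [Function.iterate_zero, id] at hWE ⊢
    obtain ⟨h1, h2, h3, h4⟩ := phi_base hS hS' hcl hw (by omega) hG hWE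
    refine ⟨h1, h2, h3, ?_⟩
    intro e he hen
    have hiff : content (rw' a w S' G) e < content (rw' a w S' G) (e + 1) ↔
        content G e < content G (e + 1) := by
      rw [h4 e he (by omega), h4 (e + 1) (by omega) (by omega)]
    exact hiff
  | succ i ih =>
    intro a ha mu G hG hWE
    have han : a < n := by omega
    obtain ⟨hcmem, hstd1, hrev, hcont⟩ := jdt_spec hG han
    set c := holeEnd n G with hc
    have hWE1 : ∀ cc, (if w < ((jdt n)^[i] (jdt n G)) cc - t then 0
        else ((jdt n)^[i] (jdt n G)) cc - t) = S cc := by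
      intro cc
      rw [← Function.iterate_succ_apply]
      exact hWE cc
    obtain ⟨hstdP1, hWEP1, hrt1, hcont1⟩ := ih (a + 1) (by omega) hstd1 hWE1
    have hYmu : IsYoung (insert c (mu.erase c)) := by
      rw [Finset.insert_erase hcmem]
      exact hG.young
    obtain ⟨hstdR, hjdtR, hholeR, hR00, hcontR⟩ :=
      rev_spec hstdP1 (Finset.notMem_erase c mu) hYmu han
    have hG00 : G (0, 0) = a + 1 := std_corner hG han
    have hPhieq : PhiF n t w S' (i + 1) G =
        revJdt n (a + 1) (PhiF n t w S' i (jdt n G)) c := by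
      show revJdt n (G (0, 0)) (PhiF n t w S' i (jdt n G)) (holeEnd n G) = _
      rw [hG00, hc]
    rw [hPhieq]
    set R := revJdt n (a + 1) (PhiF n t w S' i (jdt n G)) c with hRdef
    have hstdR' : Std mu a n R := by
      have hfin := hstdR
      rwa [Finset.insert_erase hcmem] at hfin
    refine ⟨hstdR', ?_, ?_, ?_⟩
    · intro cc
      rw [Function.iterate_succ_apply, hjdtR]
      exact hWEP1 cc
    · have h1 : PhiF n t w S (i + 1) R =
          revJdt n (R (0, 0)) (PhiF n t w S i (jdt n R)) (holeEnd n R) := rfl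
      rw [h1, hR00, hjdtR, hholeR, hrt1, hrev]
    · intro e he hen
      have he' : a + 1 < e := by omega
      exact ((hcontR e he' hen).trans (hcont1 e he hen)).trans (hcont e he' hen)

lemma square_young (N : ℕ) : IsYoung (squareDiagram N) := by
  intro x y
  constructor <;>
  · intro h
    simp only [squareDiagram, Finset.mem_product, Finset.mem_range] at h ⊢
    omega

lemma square_card (N : ℕ) : (squareDiagram N).card = N ^ 2 := by
  rw [squareDiagram, Finset.card_product, Finset.card_range, pow_two]



lemma main_key {N m k : ℕ} (hN : 1 ≤ N) (hm : m ≤ N ^ 2 - 1) (hk : 1 ≤ k) (hkm : k ≤ m + 1)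
    {lam : Finset Cell} (hcard : lam.card = N ^ 2 - m - 1) (hw : 1 ≤ N ^ 2 - m - 1)
    {T T' : Filling} (hT : IsSYTof T lam) (hT' : IsSYTof T' lam) (M : Filling)
    (hM : IsSquareSYT N M ∧ IsPieri M (N ^ 2) k ∧ waterMulti N m k M = T) :
    (IsSquareSYT N (PhiF (N ^ 2) (m + 1 - k) (N ^ 2 - m - 1) T' (m + 1 - k) M) ∧
      IsPieri (PhiF (N ^ 2) (m + 1 - k) (N ^ 2 - m - 1) T' (m + 1 - k) M) (N ^ 2) k ∧
      waterMulti N m k (PhiF (N ^ 2) (m + 1 - k) (N ^ 2 - m - 1) T' (m + 1 - k) M) = T') ∧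
    PhiF (N ^ 2) (m + 1 - k) (N ^ 2 - m - 1) T (m + 1 - k)
      (PhiF (N ^ 2) (m + 1 - k) (N ^ 2 - m - 1) T' (m + 1 - k) M) = M := by
  obtain ⟨hsq, hpi, hwm⟩ := hM
  have hn1 : 1 ≤ N ^ 2 := Nat.one_le_pow 2 N (by omega)
  have htwk : (m + 1 - k) + (N ^ 2 - m - 1) + k = N ^ 2 := by omega
  have hstdM : Std (squareDiagram N) 0 (N ^ 2) M := by
    refine ⟨?_, hsq.2, square_young N, by simp [square_card]⟩
    have h := hsq.1
    rwa [square_card] at h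
  have hWE : ∀ c, (if N ^ 2 - m - 1 <
      ((jdt (N ^ 2))^[m + 1 - k] M) c - (m + 1 - k) then 0
      else ((jdt (N ^ 2))^[m + 1 - k] M) c - (m + 1 - k)) = T c := fun c => congrFun hwm c
  obtain ⟨hstdP, hWEP, hrt, hcontP⟩ :=
    phi_spec hT hT' hcard hw htwk hk (m + 1 - k) 0 (by omega) hstdM hWE
  refine ⟨⟨?_, ?_, ?_⟩, hrt⟩
  · refine ⟨?_, hstdP.shape⟩
    rw [square_card N]
    exact hstdP.std
  · intro p hp1 hp2
    have hkN : k ≤ N ^ 2 := by omega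
    have he1 : (m + 1 - k) + (N ^ 2 - m - 1) < N ^ 2 - k + p := by omega
    have he2 : N ^ 2 - k + p + 1 ≤ N ^ 2 := by omega
    exact (hcontP (N ^ 2 - k + p) he1 he2).2 (hpi p hp1 hp2)
  · funext c
    exact hWEP c

end S10


/-- Fix `N ≥ 1`, `0 ≤ m ≤ N²-1`, `1 ≤ k ≤ m+1`, set `w := N²-m-1`,
and let `lam` be a Young diagram with `w` boxes contained in `□_N`.  For any two
standard Young tableaux `S, S'` of shape `lam`, the number of Pieri tableaux
`M ∈ 𝒯̃_{□_N}` whose water configuration `W̃'(M)` equals `S` is the same as the number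
of those with `W̃'(M) = S'`: the conditional distribution of `W̃'(M)` given its shape
`lam` is uniform on `𝒯_lam`. -/
theorem stmt10 (N m k : ℕ) (hN : 1 ≤ N) (hm : m ≤ N ^ 2 - 1) (hk : 1 ≤ k)
    (hkm : k ≤ m + 1)
    (lam : Finset Cell) (hlam : IsYoung lam) (hcard : lam.card = N ^ 2 - m - 1)
    (hsub : lam ⊆ squareDiagram N)
    (S S' : Filling) (hS : IsSYTof S lam) (hS' : IsSYTof S' lam) :
    {M : Filling | IsSquareSYT N M ∧ IsPieri M (N ^ 2) k ∧
        waterMulti N m k M = S}.ncard =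
    {M : Filling | IsSquareSYT N M ∧ IsPieri M (N ^ 2) k ∧
        waterMulti N m k M = S'}.ncard := by
  classical
  have hn1 : 1 ≤ N ^ 2 := Nat.one_le_pow 2 N (by omega)
  by_cases hw0 : N ^ 2 - m - 1 = 0
  · have hz : ∀ (T : Filling), IsSYTof T lam → T = fun _ => 0 := by
      intro T hT
      funext c
      have h1 := hT.1
      rw [hcard, hw0] at h1
      have h2 := (h1.2.1 c).1
      omega
    rw [hz S hS, hz S' hS']
  · have hw : 1 ≤ N ^ 2 - m - 1 := by omega
    have himg : {M : Filling | IsSquareSYT N M ∧ IsPieri M (N ^ 2) k ∧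
        waterMulti N m k M = S'} =
        (fun M => S10.PhiF (N ^ 2) (m + 1 - k) (N ^ 2 - m - 1) S' (m + 1 - k) M) ''
        {M : Filling | IsSquareSYT N M ∧ IsPieri M (N ^ 2) k ∧ waterMulti N m k M = S} := by
      ext M'
      constructor
      · intro hM'
        have hkey := S10.main_key hN hm hk hkm hcard hw hS' hS M' hM'
        exact ⟨S10.PhiF (N ^ 2) (m + 1 - k) (N ^ 2 - m - 1) S (m + 1 - k) M',
          hkey.1, hkey.2⟩
      · rintro ⟨M₀, hM₀, rfl⟩
        exact (S10.main_key hN hm hk hkm hcard hw hS hS' M₀ hM₀).1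
    have hinj : Set.InjOn
        (fun M => S10.PhiF (N ^ 2) (m + 1 - k) (N ^ 2 - m - 1) S' (m + 1 - k) M)
        {M : Filling | IsSquareSYT N M ∧ IsPieri M (N ^ 2) k ∧ waterMulti N m k M = S} := by
      intro M₁ h₁ M₂ h₂ heq
      have k₁ := (S10.main_key hN hm hk hkm hcard hw hS hS' M₁ h₁).2
      have k₂ := (S10.main_key hN hm hk hkm hcard hw hS hS' M₂ h₂).2
      have heq' : S10.PhiF (N ^ 2) (m + 1 - k) (N ^ 2 - m - 1) S' (m + 1 - k) M₁ =
          S10.PhiF (N ^ 2) (m + 1 - k) (N ^ 2 - m - 1) S' (m + 1 - k) M₂ := heq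
      rw [← k₁, ← k₂, heq']
    rw [himg, Set.ncard_image_of_injOn hinj]
end

section
/- Let w ≥ 0 and k ≥ 1, let T be a standard Young tableau with w+1 boxes, and let M be a standard Young tableau with w+k boxes that is a Pieri tableau with respect to k, such that the boxes with entries 1,…,w occupy the same positions in T and in M. Then for every 0 ≤ q ≤ w the configurations of water after q jeu de taquin steps coincide: for every s with q < s ≤ w, the position of the entry s in j^q(T) equals the position of the entry s in j^q(M). -/
namespace S13


def swap (F : Filling) (c1 c2 : Cell) : Filling :=
  fun c => if c = c1 then F c2 else if c = c2 then 0 else F c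

lemma swap_fst (F : Filling) (c1 c2 : Cell) : swap F c1 c2 c1 = F c2 := by simp [swap]

lemma swap_snd (F : Filling) (c1 c2 : Cell) (h : c2 ≠ c1) : swap F c1 c2 c2 = 0 := by
  simp [swap, h]

lemma swap_other (F : Filling) (c1 c2 c : Cell) (h1 : c ≠ c1) (h2 : c ≠ c2) :
    swap F c1 c2 c = F c := by simp [swap, h1, h2]

lemma slide_cases (F : Filling) (x y : ℕ) :
    (F (x+1, y) = 0 ∧ F (x, y+1) = 0 ∧ slide F (x, y) = (F, (x, y))) ∨
    (F (x+1, y) ≠ 0 ∧ (F (x, y+1) = 0 ∨ F (x+1, y) < F (x, y+1)) ∧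
      slide F (x, y) = (swap F (x, y) (x+1, y), (x+1, y))) ∨
    (F (x, y+1) ≠ 0 ∧ (F (x+1, y) = 0 ∨ F (x, y+1) ≤ F (x+1, y)) ∧
      slide F (x, y) = (swap F (x, y) (x, y+1), (x, y+1))) := by
  by_cases h0 : F (x+1, y) = 0 ∧ F (x, y+1) = 0
  · exact Or.inl ⟨h0.1, h0.2, by simp [slide, h0]⟩
  by_cases h1 : F (x, y+1) = 0 ∨ (F (x+1, y) ≠ 0 ∧ F (x+1, y) < F (x, y+1))
  · refine Or.inr (Or.inl ⟨?_, ?_, ?_⟩)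
    · rcases h1 with h | h
      · intro hr; exact h0 ⟨hr, h⟩
      · exact h.1
    · tauto
    · show slide F (x, y) = _
      simp only [slide]
      rw [if_neg h0, if_pos h1]
      rfl
  · refine Or.inr (Or.inr ⟨?_, ?_, ?_⟩)
    · intro hu; exact h1 (Or.inl hu)
    · push_neg at h1
      rcases Nat.eq_zero_or_pos (F (x+1, y)) with h | h
      · exact Or.inl h
      · exact Or.inr (h1.2 (by omega))
    · show slide F (x, y) = _
      simp only [slide]
      rw [if_neg h0, if_neg h1]
      rfl

lemma cell_ne {a b x y : ℕ} (h : ¬(a = x ∧ b = y)) : ((a, b) : Cell) ≠ (x, y) := by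
  simp only [ne_eq, Prod.mk.injEq]; tauto

def Hincr (F : Filling) : Prop :=
  ∀ a b : ℕ, F (a, b) ≠ 0 → F (a+1, b) ≠ 0 → F (a, b) < F (a+1, b)
def Vincr (F : Filling) : Prop :=
  ∀ a b : ℕ, F (a, b) ≠ 0 → F (a, b+1) ≠ 0 → F (a, b) < F (a, b+1)
def Inj (F : Filling) : Prop := ∀ c c' : Cell, F c ≠ 0 → F c = F c' → c = c'

def Inv (F : Filling) (x y : ℕ) : Prop :=
  F (x, y) = 0 ∧ Hincr F ∧ Vincr F ∧ Inj F ∧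
  (∀ a, a + 1 = x → F (a, y) ≠ 0 →
    (F (x+1, y) ≠ 0 → F (a, y) < F (x+1, y)) ∧ (F (x, y+1) ≠ 0 → F (a, y) < F (x, y+1))) ∧
  (∀ b, b + 1 = y → F (x, b) ≠ 0 →
    (F (x+1, y) ≠ 0 → F (x, b) < F (x+1, y)) ∧ (F (x, y+1) ≠ 0 → F (x, b) < F (x, y+1)))

lemma inj_swap (F : Filling) (c1 c2 : Cell) (h0 : F c1 = 0) (hne : c2 ≠ c1) (hj : Inj F) :
    Inj (swap F c1 c2) := by
  intro c c' hc hcc'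
  by_cases e1 : c = c1
  · rw [e1, swap_fst] at hc hcc'
    by_cases e2 : c' = c1
    · rw [e1, e2]
    · by_cases e3 : c' = c2
      · rw [e3, swap_snd _ _ _ hne] at hcc'; exact absurd hcc' hc
      · rw [swap_other _ _ _ _ e2 e3] at hcc'
        exact absurd (hj c2 c' hc hcc') (fun h => e3 h.symm)
  · by_cases e3 : c = c2
    · rw [e3, swap_snd _ _ _ hne] at hc; exact absurd rfl hc
    · rw [swap_other _ _ _ _ e1 e3] at hc hcc'
      by_cases e2 : c' = c1
      · rw [e2, swap_fst] at hcc'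
        exact absurd (hj c c2 hc hcc') e3
      · by_cases e4 : c' = c2
        · rw [e4, swap_snd _ _ _ hne] at hcc'; exact absurd hcc' hc
        · rw [swap_other _ _ _ _ e2 e4] at hcc'
          exact hj c c' hc hcc'

lemma inv_swapR (F : Filling) (x y : ℕ) (hI : Inv F x y)
    (hr : F (x+1, y) ≠ 0) (hcond : F (x, y+1) = 0 ∨ F (x+1, y) < F (x, y+1)) :
    Inv (swap F (x, y) (x+1, y)) (x+1) y := by
  obtain ⟨h0, hH, hV, hj, hL, hD⟩ := hI
  have hne : ((x+1, y) : Cell) ≠ (x, y) := cell_ne (by omega)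
  set G := swap F (x, y) (x+1, y) with hG
  have hGhole : G (x+1, y) = 0 := swap_snd _ _ _ hne
  have hGc : G (x, y) = F (x+1, y) := swap_fst _ _ _
  have hGo : ∀ a b : ℕ, ¬(a = x ∧ b = y) → ¬(a = x+1 ∧ b = y) → G (a, b) = F (a, b) :=
    fun a b h1 h2 => swap_other _ _ _ _ (cell_ne h1) (cell_ne h2)
  refine ⟨hGhole, ?_, ?_, inj_swap F _ _ h0 hne hj, ?_, ?_⟩
  · -- Hincr
    intro a b ha hb
    by_cases e1 : a = x ∧ b = y
    · exfalso; apply hb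
      have : ((a+1, b) : Cell) = (x+1, y) := by rw [e1.1, e1.2]
      rw [this]; exact hGhole
    by_cases e2 : a = x + 1 ∧ b = y
    · exfalso; apply ha
      have : ((a, b) : Cell) = (x+1, y) := by rw [e2.1, e2.2]
      rw [this]; exact hGhole
    -- now (a,b) untouched
    rw [hGo a b e1 e2] at ha ⊢
    by_cases e3 : a + 1 = x ∧ b = y
    · -- right cell is the old hole, now contains r
      have hcell : ((a+1, b) : Cell) = (x, y) := by rw [e3.1, e3.2]
      have hcell2 : ((a, b) : Cell) = (a, y) := by rw [e3.2]
      rw [hcell, hGc] at hb ⊢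
      rw [hcell2] at ha ⊢
      exact ((hL a e3.1 ha).1 hb)
    · have e4 : ¬(a + 1 = x + 1 ∧ b = y) := by
        intro h; exact e1 ⟨by omega, h.2⟩
      rw [hGo (a+1) b e3 e4] at hb ⊢
      exact hH a b ha hb
  · -- Vincr
    intro a b ha hb
    by_cases e1 : a = x ∧ b = y
    · -- cell (a,b) = old hole, contains r; above is (x, y+1)
      have hcell : ((a, b) : Cell) = (x, y) := by rw [e1.1, e1.2]
      have hcell2 : ((a, b+1) : Cell) = (x, y+1) := by rw [e1.1, e1.2]
      rw [hcell, hGc]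
      have e5 : ¬(x = x ∧ y + 1 = y) := by omega
      have e6 : ¬(x = x + 1 ∧ y + 1 = y) := by omega
      rw [hcell2, hGo x (y+1) e5 e6] at hb ⊢
      rcases hcond with h | h
      · exact absurd h hb
      · exact h
    by_cases e2 : a = x + 1 ∧ b = y
    · exfalso; apply ha
      have : ((a, b) : Cell) = (x+1, y) := by rw [e2.1, e2.2]
      rw [this]; exact hGhole
    rw [hGo a b e1 e2] at ha ⊢
    by_cases e3 : a = x ∧ b + 1 = y
    · -- above cell is old hole, contains r
      have hcell : ((a, b+1) : Cell) = (x, y) := by rw [e3.1, e3.2]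
      have hcell2 : ((a, b) : Cell) = (x, b) := by rw [e3.1]
      rw [hcell, hGc] at hb ⊢
      rw [hcell2] at ha ⊢
      exact (hD b e3.2 ha).1 hb
    by_cases e4 : a = x + 1 ∧ b + 1 = y
    · exfalso; apply hb
      have hcell : ((a, b+1) : Cell) = (x+1, y) := by rw [e4.1, e4.2]
      rw [hcell]; exact hGhole
    · rw [hGo a (b+1) e3 e4] at hb ⊢
      exact hV a b ha hb
  · -- L-condition at new hole (x+1, y)
    intro a ha hane
    have hax : a = x := by omega
    rw [hax] at hane ⊢
    have e1 : ¬(x + 1 + 1 = x ∧ y = y) := by omega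
    have e2 : ¬(x + 1 + 1 = x + 1 ∧ y = y) := by omega
    have e3 : ¬(x + 1 = x ∧ y + 1 = y) := by omega
    have e4 : ¬(x + 1 = x + 1 ∧ y + 1 = y) := by omega
    rw [hGc]
    rw [hGo (x+1+1) y e1 e2, hGo (x+1) (y+1) e3 e4]
    exact ⟨fun h2 => hH (x+1) y hr h2, fun h2 => hV (x+1) y hr h2⟩
  · -- D-condition at new hole (x+1, y)
    intro b hb hbne
    have e1 : ¬(x + 1 = x ∧ b = y) := by omega
    have e2 : ¬(x + 1 = x + 1 ∧ b = y) := by omega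
    rw [hGo (x+1) b e1 e2] at hbne
    have hlt : F (x+1, b) < F (x+1, y) := by
      have := hV (x+1) b hbne
      rw [hb] at this
      exact this hr
    have e3 : ¬(x + 1 + 1 = x ∧ y = y) := by omega
    have e4 : ¬(x + 1 + 1 = x + 1 ∧ y = y) := by omega
    have e5 : ¬(x + 1 = x ∧ y + 1 = y) := by omega
    have e6 : ¬(x + 1 = x + 1 ∧ y + 1 = y) := by omega
    rw [hGo (x+1) b e1 e2, hGo (x+1+1) y e3 e4, hGo (x+1) (y+1) e5 e6]
    constructor
    · intro h2; exact lt_trans hlt (hH (x+1) y hr h2)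
    · intro h2; exact lt_trans hlt (hV (x+1) y hr h2)


lemma inv_swapU (F : Filling) (x y : ℕ) (hI : Inv F x y)
    (hu : F (x, y+1) ≠ 0) (hcond : F (x+1, y) = 0 ∨ F (x, y+1) ≤ F (x+1, y)) :
    Inv (swap F (x, y) (x, y+1)) x (y+1) := by
  obtain ⟨h0, hH, hV, hj, hL, hD⟩ := hI
  have hne : ((x, y+1) : Cell) ≠ (x, y) := cell_ne (by omega)
  set G := swap F (x, y) (x, y+1) with hG
  have hGhole : G (x, y+1) = 0 := swap_snd _ _ _ hne
  have hGc : G (x, y) = F (x, y+1) := swap_fst _ _ _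
  have hGo : ∀ a b : ℕ, ¬(a = x ∧ b = y) → ¬(a = x ∧ b = y+1) → G (a, b) = F (a, b) :=
    fun a b h1 h2 => swap_other _ _ _ _ (cell_ne h1) (cell_ne h2)
  have hstrict : F (x+1, y) ≠ 0 → F (x, y+1) < F (x+1, y) := by
    intro hr
    rcases hcond with h | h
    · exact absurd h hr
    rcases lt_or_eq_of_le h with h2 | h2
    · exact h2
    · exfalso
      have := hj (x, y+1) (x+1, y) hu h2
      simp only [Prod.mk.injEq] at this
      omega
  refine ⟨hGhole, ?_, ?_, inj_swap F _ _ h0 hne hj, ?_, ?_⟩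
  · -- Hincr
    intro a b ha hb
    by_cases e1 : a = x ∧ b = y
    · -- (a,b) = old hole, contains u; right neighbour is (x+1, y) untouched
      have hcell : ((a, b) : Cell) = (x, y) := by rw [e1.1, e1.2]
      have hcell2 : ((a+1, b) : Cell) = (x+1, y) := by rw [e1.1, e1.2]
      have e5 : ¬(x + 1 = x ∧ y = y) := by omega
      have e6 : ¬(x + 1 = x ∧ y = y + 1) := by omega
      rw [hcell, hGc]
      rw [hcell2, hGo (x+1) y e5 e6] at hb ⊢
      exact hstrict hb
    by_cases e2 : a = x ∧ b = y + 1
    · exfalso; apply ha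
      have hcell : ((a, b) : Cell) = (x, y+1) := by rw [e2.1, e2.2]
      rw [hcell]; exact hGhole
    rw [hGo a b e1 e2] at ha ⊢
    by_cases e3 : a + 1 = x ∧ b = y
    · -- right cell is old hole, contains u
      have hcell : ((a+1, b) : Cell) = (x, y) := by rw [e3.1, e3.2]
      have hcell2 : ((a, b) : Cell) = (a, y) := by rw [e3.2]
      rw [hcell, hGc] at hb ⊢
      rw [hcell2] at ha ⊢
      exact (hL a e3.1 ha).2 hb
    by_cases e4 : a + 1 = x ∧ b = y + 1
    · exfalso; apply hb
      have hcell : ((a+1, b) : Cell) = (x, y+1) := by rw [e4.1, e4.2]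
      rw [hcell]; exact hGhole
    · rw [hGo (a+1) b e3 e4] at hb ⊢
      exact hH a b ha hb
  · -- Vincr
    intro a b ha hb
    by_cases e1 : a = x ∧ b = y
    · exfalso; apply hb
      have hcell : ((a, b+1) : Cell) = (x, y+1) := by rw [e1.1, e1.2]
      rw [hcell]; exact hGhole
    by_cases e2 : a = x ∧ b = y + 1
    · exfalso; apply ha
      have hcell : ((a, b) : Cell) = (x, y+1) := by rw [e2.1, e2.2]
      rw [hcell]; exact hGhole
    rw [hGo a b e1 e2] at ha ⊢
    by_cases e3 : a = x ∧ b + 1 = y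
    · -- above cell is old hole, contains u
      have hcell : ((a, b+1) : Cell) = (x, y) := by rw [e3.1, e3.2]
      have hcell2 : ((a, b) : Cell) = (x, b) := by rw [e3.1]
      rw [hcell, hGc] at hb ⊢
      rw [hcell2] at ha ⊢
      exact (hD b e3.2 ha).2 hb
    by_cases e4 : a = x ∧ b + 1 = y + 1
    · exfalso
      have : a = x ∧ b = y := ⟨e4.1, by omega⟩
      exact e1 this
    · rw [hGo a (b+1) e3 e4] at hb ⊢
      exact hV a b ha hb
  · -- L-condition at new hole (x, y+1)
    intro a ha hane
    have e1 : ¬(a = x ∧ y + 1 = y) := by omega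
    have e2 : ¬(a = x ∧ y + 1 = y + 1) := by intro h; omega
    rw [hGo a (y+1) e1 e2] at hane
    have hlt : F (a, y+1) < F (x, y+1) := by
      have := hH a (y+1) hane
      rw [ha] at this
      exact this hu
    have e3 : ¬(x + 1 = x ∧ y + 1 = y) := by omega
    have e4 : ¬(x + 1 = x ∧ y + 1 = y + 1) := by omega
    have e5 : ¬(x = x ∧ y + 1 + 1 = y) := by omega
    have e6 : ¬(x = x ∧ y + 1 + 1 = y + 1) := by omega
    rw [hGo a (y+1) e1 e2, hGo (x+1) (y+1) e3 e4, hGo x (y+1+1) e5 e6]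
    constructor
    · intro h2; exact lt_trans hlt (hH x (y+1) hu h2)
    · intro h2; exact lt_trans hlt (hV x (y+1) hu h2)
  · -- D-condition at new hole (x, y+1)
    intro b hb hbne
    have hby : b = y := by omega
    rw [hby] at hbne ⊢
    rw [hGc] at hbne ⊢
    have e3 : ¬(x + 1 = x ∧ y + 1 = y) := by omega
    have e4 : ¬(x + 1 = x ∧ y + 1 = y + 1) := by omega
    have e5 : ¬(x = x ∧ y + 1 + 1 = y) := by omega
    have e6 : ¬(x = x ∧ y + 1 + 1 = y + 1) := by omega
    rw [hGo (x+1) (y+1) e3 e4, hGo x (y+1+1) e5 e6]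
    exact ⟨fun h2 => hH x (y+1) hu h2, fun h2 => hV x (y+1) hu h2⟩


lemma inv_slide (F : Filling) (x y : ℕ) (hI : Inv F x y) :
    Inv (slide F (x, y)).1 (slide F (x, y)).2.1 (slide F (x, y)).2.2 := by
  rcases slide_cases F x y with ⟨_, _, heq⟩ | ⟨hr, hc, heq⟩ | ⟨hu, hc, heq⟩
  · rw [heq]; exact hI
  · rw [heq]; exact inv_swapR F x y hI hr hc
  · rw [heq]; exact inv_swapU F x y hI hu hc

lemma inv_slideIter (f : ℕ) : ∀ (F : Filling) (x y : ℕ), Inv F x y →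
    Inv (slideIter f F (x, y)).1 (slideIter f F (x, y)).2.1 (slideIter f F (x, y)).2.2 := by
  induction f with
  | zero => intro F x y hI; exact hI
  | succ f ih =>
      intro F x y hI
      rw [slideIter]
      split_ifs with hg
      · exact hI
      · have h1 := inv_slide F x y hI
        rcases hs : (slide F (x, y)).2 with ⟨x', y'⟩
        rw [hs] at h1
        exact ih (slide F (x, y)).1 x' y' h1

def trunc (w : ℕ) (F : Filling) : Filling := fun c => if F c ≤ w then F c else 0

lemma trunc_eq_zero_iff {w : ℕ} {F : Filling} {c : Cell} :
    trunc w F c = 0 ↔ (F c = 0 ∨ w < F c) := by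
  simp only [trunc]
  split_ifs with h
  · omega
  · simp; omega

lemma trunc_of_le {w : ℕ} {F : Filling} {c : Cell} (h : F c ≤ w) : trunc w F c = F c := by
  simp [trunc, h]

lemma frozen (w : ℕ) (f : ℕ) : ∀ (F : Filling) (x y : ℕ), Inv F x y →
    trunc w F (x+1, y) = 0 → trunc w F (x, y+1) = 0 →
    trunc w ((slideIter f F (x, y)).1) = trunc w F := by
  induction f with
  | zero => intro F x y _ _ _; rfl
  | succ f ih =>
      intro F x y hI htr htu
      rw [slideIter]
      split_ifs with hg
      · rfl
      · have hInv' := inv_slide F x y hI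
        rcases slide_cases F x y with ⟨h1, h2, heq⟩ | ⟨hr, hc, heq⟩ | ⟨hu, hc, heq⟩
        · exact absurd ⟨h1, h2⟩ hg
        · -- slide right, value F (x+1,y) is > w
          have hrw : w < F (x+1, y) := by
            rcases trunc_eq_zero_iff.1 htr with h | h
            · exact absurd h hr
            · exact h
          rw [heq] at hInv' ⊢
          dsimp only at hInv' ⊢
          have hne : ((x+1, y) : Cell) ≠ (x, y) := cell_ne (by omega)
          set G := swap F (x, y) (x+1, y) with hGdef
          have htrG : trunc w G = trunc w F := by
            rw [hGdef]
            funext c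
            by_cases e1 : c = ((x, y) : Cell)
            · rw [e1]
              rw [trunc_eq_zero_iff.2 (Or.inr (by rw [swap_fst]; exact hrw))]
              obtain ⟨hFh, _, _, _, _, _⟩ := hI
              rw [trunc_eq_zero_iff.2 (Or.inl hFh)]
            · by_cases e2 : c = ((x+1, y) : Cell)
              · rw [e2, trunc_eq_zero_iff.2 (Or.inl (swap_snd _ _ _ hne)), htr]
              · simp only [trunc, swap_other _ _ _ _ e1 e2]
          rw [ih G (x+1) y hInv' ?_ ?_, htrG]
          · -- trunc w G (x+1+1, y) = 0
            have e1 : ¬(x + 1 + 1 = x ∧ y = y) := by omega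
            have e2 : ¬(x + 1 + 1 = x + 1 ∧ y = y) := by omega
            have : G (x+1+1, y) = F (x+1+1, y) := swap_other _ _ _ _ (cell_ne e1) (cell_ne e2)
            rw [trunc_eq_zero_iff, this]
            rcases Nat.eq_zero_or_pos (F (x+1+1, y)) with h | h
            · exact Or.inl h
            · refine Or.inr ?_
              have := hI.2.1 (x+1) y hr (by omega)
              omega
          · have e1 : ¬(x + 1 = x ∧ y + 1 = y) := by omega
            have e2 : ¬(x + 1 = x + 1 ∧ y + 1 = y) := by omega
            have : G (x+1, y+1) = F (x+1, y+1) := swap_other _ _ _ _ (cell_ne e1) (cell_ne e2)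
            rw [trunc_eq_zero_iff, this]
            rcases Nat.eq_zero_or_pos (F (x+1, y+1)) with h | h
            · exact Or.inl h
            · refine Or.inr ?_
              have := hI.2.2.1 (x+1) y hr (by omega)
              omega
        · -- slide up, value F (x,y+1) is > w
          have huw : w < F (x, y+1) := by
            rcases trunc_eq_zero_iff.1 htu with h | h
            · exact absurd h hu
            · exact h
          rw [heq] at hInv' ⊢
          dsimp only at hInv' ⊢
          have hne : ((x, y+1) : Cell) ≠ (x, y) := cell_ne (by omega)
          set G := swap F (x, y) (x, y+1) with hGdef
          have htrG : trunc w G = trunc w F := by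
            rw [hGdef]
            funext c
            by_cases e1 : c = ((x, y) : Cell)
            · rw [e1]
              rw [trunc_eq_zero_iff.2 (Or.inr (by rw [swap_fst]; exact huw))]
              obtain ⟨hFh, _, _, _, _, _⟩ := hI
              rw [trunc_eq_zero_iff.2 (Or.inl hFh)]
            · by_cases e2 : c = ((x, y+1) : Cell)
              · rw [e2, trunc_eq_zero_iff.2 (Or.inl (swap_snd _ _ _ hne)), htu]
              · simp only [trunc, swap_other _ _ _ _ e1 e2]
          rw [ih G x (y+1) hInv' ?_ ?_, htrG]
          · have e1 : ¬(x + 1 = x ∧ y + 1 = y) := by omega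
            have e2 : ¬(x + 1 = x ∧ y + 1 = y + 1) := by omega
            have : G (x+1, y+1) = F (x+1, y+1) := swap_other _ _ _ _ (cell_ne e1) (cell_ne e2)
            rw [trunc_eq_zero_iff, this]
            rcases Nat.eq_zero_or_pos (F (x+1, y+1)) with h | h
            · exact Or.inl h
            · refine Or.inr ?_
              have := hI.2.1 x (y+1) hu (by omega)
              omega
          · have e1 : ¬(x = x ∧ y + 1 + 1 = y) := by omega
            have e2 : ¬(x = x ∧ y + 1 + 1 = y + 1) := by omega
            have : G (x, y+1+1) = F (x, y+1+1) := swap_other _ _ _ _ (cell_ne e1) (cell_ne e2)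
            rw [trunc_eq_zero_iff, this]
            rcases Nat.eq_zero_or_pos (F (x, y+1+1)) with h | h
            · exact Or.inl h
            · refine Or.inr ?_
              have := hI.2.2.1 x (y+1) hu (by omega)
              omega


lemma slide_trunc (w : ℕ) (F : Filling) (x y : ℕ)
    (hne : ¬(trunc w F (x+1, y) = 0 ∧ trunc w F (x, y+1) = 0)) :
    slide (trunc w F) (x, y) = (trunc w ((slide F (x, y)).1), (slide F (x, y)).2) := by
  have htr : ∀ c : Cell, trunc w F c ≠ 0 → (trunc w F c = F c ∧ F c ≠ 0 ∧ F c ≤ w) := by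
    intro c h
    simp only [trunc] at h ⊢
    split_ifs at h ⊢ with h1
    · exact ⟨rfl, h, h1⟩
    · exact absurd rfl h
  rcases slide_cases F x y with ⟨h1, h2, heq⟩ | ⟨hr, hc, heq⟩ | ⟨hu, hc, heq⟩
  · exfalso
    exact hne ⟨trunc_eq_zero_iff.2 (Or.inl h1), trunc_eq_zero_iff.2 (Or.inl h2)⟩
  · -- full process slides right
    have hrsmall : F (x+1, y) ≤ w := by
      by_contra hbig
      have hr0 : trunc w F (x+1, y) = 0 := trunc_eq_zero_iff.2 (Or.inr (by omega))
      have hu' : trunc w F (x, y+1) ≠ 0 := by tauto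
      obtain ⟨hueq, hu0, huw⟩ := htr _ hu'
      rcases hc with h | h
      · exact hu0 h
      · omega
    have hr' : trunc w F (x+1, y) ≠ 0 := by
      rw [trunc_of_le hrsmall]; exact hr
    rcases slide_cases (trunc w F) x y with ⟨g1, g2, geq⟩ | ⟨gr, gc, geq⟩ | ⟨gu, gc, geq⟩
    · exact absurd g1 hr'
    · rw [geq, heq]
      dsimp only
      congr 1
      funext c
      simp only [trunc, swap]
      split_ifs <;> omega
    · exfalso
      obtain ⟨hueq, hu0, huw⟩ := htr _ gu
      rcases hc with h | h
      · exact hu0 h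
      · rcases gc with g | g
        · exact hr' g
        · rw [trunc_of_le hrsmall, trunc_of_le huw] at g
          omega
  · -- full process slides up
    have husmall : F (x, y+1) ≤ w := by
      by_contra hbig
      have hu0' : trunc w F (x, y+1) = 0 := trunc_eq_zero_iff.2 (Or.inr (by omega))
      have hr'' : trunc w F (x+1, y) ≠ 0 := by tauto
      obtain ⟨hreq, hr0, hrw⟩ := htr _ hr''
      rcases hc with h | h
      · exact hr0 h
      · omega
    have hu' : trunc w F (x, y+1) ≠ 0 := by
      rw [trunc_of_le husmall]; exact hu
    rcases slide_cases (trunc w F) x y with ⟨g1, g2, geq⟩ | ⟨gr, gc, geq⟩ | ⟨gu, gc, geq⟩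
    · exact absurd g2 hu'
    · exfalso
      obtain ⟨hreq, hr0, hrw⟩ := htr _ gr
      rcases hc with h | h
      · exact hr0 h
      · rcases gc with g | g
        · exact hu' g
        · rw [trunc_of_le husmall, trunc_of_le hrw] at g
          omega
    · rw [geq, heq]
      dsimp only
      congr 1
      funext c
      simp only [trunc, swap]
      split_ifs <;> omega

lemma sim (w : ℕ) (f : ℕ) : ∀ (F : Filling) (x y : ℕ), Inv F x y →
    trunc w ((slideIter f F (x, y)).1) = (slideIter f (trunc w F) (x, y)).1 := by
  induction f with
  | zero => intro F x y _; rfl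
  | succ f ih =>
      intro F x y hI
      by_cases hg2 : trunc w F (x+1, y) = 0 ∧ trunc w F (x, y+1) = 0
      · have h1 : slideIter (f+1) (trunc w F) (x, y) = (trunc w F, (x, y)) := by
          rw [slideIter, if_pos]
          exact ⟨hg2.1, hg2.2⟩
        rw [h1]
        exact frozen w (f+1) F x y hI hg2.1 hg2.2
      · have hgF : ¬(F (x+1, y) = 0 ∧ F (x, y+1) = 0) := by
          intro h
          exact hg2 ⟨trunc_eq_zero_iff.2 (Or.inl h.1), trunc_eq_zero_iff.2 (Or.inl h.2)⟩
        have hst := slide_trunc w F x y hg2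
        have e1 : slideIter (f+1) F (x, y) = slideIter f (slide F (x, y)).1 (slide F (x, y)).2 := by
          rw [slideIter, if_neg]
          exact hgF
        have e2 : slideIter (f+1) (trunc w F) (x, y)
            = slideIter f (slide (trunc w F) (x, y)).1 (slide (trunc w F) (x, y)).2 := by
          rw [slideIter, if_neg]
          exact hg2
        rw [e1, e2, hst]
        dsimp only
        have hI' := inv_slide F x y hI
        rcases hs : (slide F (x, y)).2 with ⟨x', y'⟩
        rw [hs] at hI'
        dsimp only at hI'
        exact ih (slide F (x, y)).1 x' y' hI'

def Bnd (B : ℕ) (F : Filling) : Prop := ∀ c : Cell, F c ≠ 0 → c.1 + c.2 < B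

lemma bnd_slide (B : ℕ) (F : Filling) (x y : ℕ) (hB : Bnd B F) :
    Bnd B (slide F (x, y)).1 := by
  rcases slide_cases F x y with ⟨_, _, heq⟩ | ⟨hr, _, heq⟩ | ⟨hu, _, heq⟩
  · rw [heq]; exact hB
  · rw [heq]
    dsimp only
    intro c hc
    by_cases e1 : c = ((x, y) : Cell)
    · rw [e1, swap_fst] at hc
      have := hB (x+1, y) hc
      dsimp only at this
      rw [e1]
      show x + y < B
      omega
    · by_cases e2 : c = ((x+1, y) : Cell)
      · rw [e2, swap_snd _ _ _ (cell_ne (by omega))] at hc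
        exact absurd rfl hc
      · rw [swap_other _ _ _ _ e1 e2] at hc
        exact hB c hc
  · rw [heq]
    dsimp only
    intro c hc
    by_cases e1 : c = ((x, y) : Cell)
    · rw [e1, swap_fst] at hc
      have := hB (x, y+1) hc
      dsimp only at this
      rw [e1]
      show x + y < B
      omega
    · by_cases e2 : c = ((x, y+1) : Cell)
      · rw [e2, swap_snd _ _ _ (cell_ne (by omega))] at hc
        exact absurd rfl hc
      · rw [swap_other _ _ _ _ e1 e2] at hc
        exact hB c hc

lemma bnd_slideIter (B : ℕ) (f : ℕ) : ∀ (F : Filling) (h : Cell), Bnd B F →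
    Bnd B (slideIter f F h).1 := by
  induction f with
  | zero => intro F h hB; exact hB
  | succ f ih =>
      intro F h hB
      rw [slideIter]
      split_ifs with hg
      · exact hB
      · rcases h with ⟨x, y⟩
        exact ih _ _ (bnd_slide B F x y hB)

lemma stable (B : ℕ) (f : ℕ) : ∀ (f' : ℕ) (F : Filling) (x y : ℕ), Bnd B F →
    B ≤ x + y + f → B ≤ x + y + f' → slideIter f F (x, y) = slideIter f' F (x, y) := by
  induction f with
  | zero =>
      intro f' F x y hB h1 h2
      have hg1 : F (x+1, y) = 0 := by
        by_contra h
        have := hB (x+1, y) h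
        dsimp only at this
        omega
      have hg2 : F (x, y+1) = 0 := by
        by_contra h
        have := hB (x, y+1) h
        dsimp only at this
        omega
      cases f' with
      | zero => rfl
      | succ f' =>
          have e2 : slideIter (f'+1) F (x, y) = (F, (x, y)) := by
            rw [slideIter, if_pos]; exact ⟨hg1, hg2⟩
          rw [e2]
          rfl
  | succ f ih =>
      intro f' F x y hB h1 h2
      by_cases hg : F (x+1, y) = 0 ∧ F (x, y+1) = 0
      · have e1 : slideIter (f+1) F (x, y) = (F, (x, y)) := by
          rw [slideIter, if_pos]; exact hg
        have e2 : slideIter f' F (x, y) = (F, (x, y)) := by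
          cases f' with
          | zero => rfl
          | succ f'' => rw [slideIter, if_pos]; exact hg
        rw [e1, e2]
      · have hocc : x + y + 1 < B := by
          rcases not_and_or.1 hg with h | h
          · have := hB (x+1, y) h
            dsimp only at this
            omega
          · have := hB (x, y+1) h
            dsimp only at this
            omega
        cases f' with
        | zero => omega
        | succ f'' =>
            have e1 : slideIter (f+1) F (x, y)
                = slideIter f (slide F (x, y)).1 (slide F (x, y)).2 := by
              rw [slideIter, if_neg]; exact hg
            have e2 : slideIter (f''+1) F (x, y)
                = slideIter f'' (slide F (x, y)).1 (slide F (x, y)).2 := by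
              rw [slideIter, if_neg]; exact hg
            rw [e1, e2]
            have hsum : (slide F (x, y)).2.1 + (slide F (x, y)).2.2 = x + y + 1 := by
              rcases slide_cases F x y with ⟨a, b, heq⟩ | ⟨_, _, heq⟩ | ⟨_, _, heq⟩
              · exact absurd ⟨a, b⟩ hg
              · rw [heq]; dsimp only; omega
              · rw [heq]; dsimp only; omega
            rcases hs : (slide F (x, y)).2 with ⟨x', y'⟩
            rw [hs] at hsum
            dsimp only at hsum
            exact ih f'' (slide F (x, y)).1 x' y' (bnd_slide B F x y hB) (by omega) (by omega)

lemma cellsum_lt (F : Filling) (hH0 : ∀ a b : ℕ, F (a+1, b) ≠ 0 → F (a, b) ≠ 0)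
    (hV0 : ∀ a b : ℕ, F (a, b+1) ≠ 0 → F (a, b) ≠ 0)
    (hH1 : ∀ a b : ℕ, F (a+1, b) ≠ 0 → F (a, b) < F (a+1, b))
    (hV1 : ∀ a b : ℕ, F (a, b+1) ≠ 0 → F (a, b) < F (a, b+1)) :
    ∀ a b : ℕ, F (a, b) ≠ 0 → a + b < F (a, b) := by
  intro a
  induction a with
  | zero =>
      intro b
      induction b with
      | zero => intro h; omega
      | succ b ihb =>
          intro h
          have h0 := hV0 0 b h
          have h1 := hV1 0 b h
          have h2 := ihb h0
          omega
  | succ a iha =>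
      intro b h
      have h0 := hH0 a b h
      have h1 := hH1 a b h
      have h2 := iha b h0
      omega

lemma inv_init (F : Filling) (hH : Hincr F) (hV : Vincr F) (hj : Inj F) :
    Inv (fun c => if c = ((0, 0) : Cell) then 0 else F c) 0 0 := by
  set G : Filling := fun c => if c = ((0, 0) : Cell) then 0 else F c with hGdef
  have hGo : ∀ a b : ℕ, ¬(a = 0 ∧ b = 0) → G (a, b) = F (a, b) := by
    intro a b h
    rw [hGdef]
    exact if_neg (cell_ne h)
  have hGz : G (0, 0) = 0 := by rw [hGdef]; simp
  refine ⟨hGz, ?_, ?_, ?_, ?_, ?_⟩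
  · intro a b ha hb
    have e2 : ¬(a + 1 = 0 ∧ b = 0) := by omega
    rw [hGo (a+1) b e2] at hb ⊢
    by_cases e1 : a = 0 ∧ b = 0
    · exfalso
      apply ha
      have : ((a, b) : Cell) = (0, 0) := by rw [e1.1, e1.2]
      rw [this]
      exact hGz
    · rw [hGo a b e1] at ha ⊢
      exact hH a b ha hb
  · intro a b ha hb
    have e2 : ¬(a = 0 ∧ b + 1 = 0) := by omega
    rw [hGo a (b+1) e2] at hb ⊢
    by_cases e1 : a = 0 ∧ b = 0
    · exfalso
      apply ha
      have : ((a, b) : Cell) = (0, 0) := by rw [e1.1, e1.2]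
      rw [this]
      exact hGz
    · rw [hGo a b e1] at ha ⊢
      exact hV a b ha hb
  · intro c c' hc hcc'
    by_cases e1 : c = ((0, 0) : Cell)
    · exfalso; apply hc; rw [e1]; exact hGz
    · by_cases e2 : c' = ((0, 0) : Cell)
      · exfalso
        rw [e2, hGz] at hcc'
        exact hc hcc'
      · have g1 : G c = F c := by rw [hGdef]; exact if_neg e1
        have g2 : G c' = F c' := by rw [hGdef]; exact if_neg e2
        rw [g1] at hc hcc'
        rw [g2] at hcc'
        exact hj c c' hc hcc'
  · intro a ha
    exact absurd ha (by omega)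
  · intro b hb
    exact absurd hb (by omega)

lemma hvj_jdt (n : ℕ) (F : Filling) (hH : Hincr F) (hV : Vincr F) (hj : Inj F) :
    Hincr (jdt n F) ∧ Vincr (jdt n F) ∧ Inj (jdt n F) := by
  have h0 := inv_init F hH hV hj
  have h1 := inv_slideIter n _ 0 0 h0
  exact ⟨h1.2.1, h1.2.2.1, h1.2.2.2.1⟩

lemma jdt_trunc (w n : ℕ) (F : Filling) (hH : Hincr F) (hV : Vincr F) (hj : Inj F) :
    trunc w (jdt n F) = jdt n (trunc w F) := by
  have h0 := inv_init F hH hV hj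
  have hsim := sim w n (fun c => if c = ((0, 0) : Cell) then 0 else F c) 0 0 h0
  have hze : trunc w (fun c => if c = ((0, 0) : Cell) then 0 else F c)
      = (fun c => if c = ((0, 0) : Cell) then 0 else trunc w F c) := by
    funext c
    simp only [trunc]
    by_cases e : c = ((0, 0) : Cell)
    · subst e; simp
    · simp only [if_neg e]
  show trunc w ((slideIter n (fun c => if c = ((0, 0) : Cell) then 0 else F c) (0, 0)).1)
      = (slideIter n (fun c => if c = ((0, 0) : Cell) then 0 else trunc w F c) (0, 0)).1
  rw [hsim, hze]

lemma iter_trunc (w n q : ℕ) (F : Filling) (hH : Hincr F) (hV : Vincr F) (hj : Inj F) :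
    trunc w ((jdt n)^[q] F) = (jdt n)^[q] (trunc w F) := by
  induction q generalizing F with
  | zero => rfl
  | succ q ih =>
      rw [Function.iterate_succ_apply, Function.iterate_succ_apply]
      obtain ⟨hH', hV', hj'⟩ := hvj_jdt n F hH hV hj
      rw [← jdt_trunc w n F hH hV hj]
      exact ih (jdt n F) hH' hV' hj'

lemma bnd_jdt (B n : ℕ) (F : Filling) (hB : Bnd B F) : Bnd B (jdt n F) := by
  have h0 : Bnd B (fun c => if c = ((0, 0) : Cell) then 0 else F c) := by
    intro c hc
    by_cases e : c = ((0, 0) : Cell)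
    · rw [e] at hc; simp at hc
    · apply hB
      dsimp only at hc
      rw [if_neg e] at hc
      exact hc
  exact bnd_slideIter B n _ (0, 0) h0

lemma jdt_fuel (B f f' : ℕ) (G : Filling) (hB : Bnd B G) (h1 : B ≤ f) (h2 : B ≤ f') :
    jdt f G = jdt f' G := by
  have h0 : Bnd B (fun c => if c = ((0, 0) : Cell) then 0 else G c) := by
    intro c hc
    by_cases e : c = ((0, 0) : Cell)
    · rw [e] at hc; simp at hc
    · apply hB
      dsimp only at hc
      rw [if_neg e] at hc
      exact hc
  have := stable B f f' (fun c => if c = ((0, 0) : Cell) then 0 else G c) 0 0 h0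
    (by omega) (by omega)
  show (slideIter f _ (0, 0)).1 = (slideIter f' _ (0, 0)).1
  rw [this]

lemma iter_fuel (B f f' q : ℕ) (G : Filling) (hB : Bnd B G) (h1 : B ≤ f) (h2 : B ≤ f') :
    (jdt f)^[q] G = (jdt f')^[q] G := by
  induction q generalizing G with
  | zero => rfl
  | succ q ih =>
      rw [Function.iterate_succ_apply, Function.iterate_succ_apply]
      rw [← jdt_fuel B f f' G hB h1 h2]
      exact ih (jdt f G) (bnd_jdt B f G hB)

open Classical in
lemma pos_congr (F F' : Filling) (s : ℕ) (h : ∀ c : Cell, F c = s ↔ F' c = s) :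
    pos F s = pos F' s := by
  have hfun : (fun c : Cell => F c = s) = (fun c : Cell => F' c = s) :=
    funext fun c => propext (h c)
  show (fun p : Cell → Prop => if h : ∃ c, p c then h.choose else ((0, 0) : Cell))
        (fun c : Cell => F c = s)
      = (fun p : Cell → Prop => if h : ∃ c, p c then h.choose else ((0, 0) : Cell))
        (fun c : Cell => F' c = s)
  exact congrArg (fun p : Cell → Prop => if h : ∃ c, p c then h.choose else ((0, 0) : Cell)) hfun

lemma pos_trunc (w : ℕ) (F : Filling) (s : ℕ) (h1 : 1 ≤ s) (h2 : s ≤ w) :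
    pos F s = pos (trunc w F) s := by
  apply pos_congr
  intro c
  simp only [trunc]
  split_ifs with h
  · exact Iff.rfl
  · constructor
    · intro hh; omega
    · intro hh; omega

lemma pos_spec (F : Filling) (v : ℕ) (h : ∃! c : Cell, F c = v) :
    F (pos F v) = v ∧ ∀ c : Cell, F c = v → c = pos F v := by
  obtain ⟨c0, hc0, huniq⟩ := h
  have hex : ∃ c : Cell, F c = v := ⟨c0, hc0⟩
  simp only [pos, dif_pos hex]
  exact ⟨hex.choose_spec, fun c hc => (huniq c hc).trans (huniq _ hex.choose_spec).symm⟩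

end S13

/-- Let `w ≥ 0`, `k ≥ 1`, let `T` be a standard Young tableau with
`w+1` boxes and `M` a standard Young tableau with `w+k` boxes which is Pieri with
respect to `k`, such that the boxes with entries `1, …, w` occupy the same positions in
`T` and in `M`.  Then for every `0 ≤ q ≤ w` the configurations of water after `q` jeu
de taquin steps coincide: for `q < s ≤ w` the position of the entry `s` in `j^q(T)`
equals the position of the entry `s` in `j^q(M)`. -/
theorem stmt13 (w k : ℕ) (hk : 1 ≤ k) (T M : Filling)
    (hT : IsStdFilling T 0 (w + 1)) (hM : IsStdFilling M 0 (w + k))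
    (hP : IsPieri M (w + k) k)
    (hsame : ∀ s : ℕ, 1 ≤ s → s ≤ w → pos T s = pos M s) :
    ∀ q : ℕ, q ≤ w → ∀ s : ℕ, q < s → s ≤ w →
      pos ((jdt (w + 1))^[q] T) s = pos ((jdt (w + k))^[q] M) s := by
  intro q hq s hqs hsw
  obtain ⟨hTex, hTrange, hTsh1, hTsh2, hTH, hTV⟩ := hT
  obtain ⟨hMex, hMrange, hMsh1, hMsh2, hMH, hMV⟩ := hM
  have hTHincr : S13.Hincr T := fun a b _ hb => hTH a b hb
  have hTVincr : S13.Vincr T := fun a b _ hb => hTV a b hb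
  have hMHincr : S13.Hincr M := fun a b _ hb => hMH a b hb
  have hMVincr : S13.Vincr M := fun a b _ hb => hMV a b hb
  have hTInj : S13.Inj T := by
    intro c c' hc hcc'
    have h1 : T c ≤ w + 1 := (hTrange c).1
    have h0 : 0 < T c := by
      rcases (hTrange c).2 with h | h
      · exact absurd h hc
      · exact h
    obtain ⟨c0, hc0, huniq⟩ := hTex (T c) h0 h1
    rw [huniq c rfl, huniq c' hcc'.symm]
  have hMInj : S13.Inj M := by
    intro c c' hc hcc'
    have h1 : M c ≤ w + k := (hMrange c).1
    have h0 : 0 < M c := by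
      rcases (hMrange c).2 with h | h
      · exact absurd h hc
      · exact h
    obtain ⟨c0, hc0, huniq⟩ := hMex (M c) h0 h1
    rw [huniq c rfl, huniq c' hcc'.symm]
  have key : ∀ v : ℕ, 1 ≤ v → v ≤ w → ∀ c : Cell, (T c = v ↔ M c = v) := by
    intro v h1 h2 c
    have hTu := hTex v h1 (by omega)
    have hMu := hMex v h1 (by omega)
    obtain ⟨hT1, hT2⟩ := S13.pos_spec T v hTu
    obtain ⟨hM1, hM2⟩ := S13.pos_spec M v hMu
    constructor
    · intro h; rw [hT2 c h, hsame v h1 h2]; exact hM1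
    · intro h; rw [hM2 c h, ← hsame v h1 h2]; exact hT1
  have htr : S13.trunc w T = S13.trunc w M := by
    funext c
    simp only [S13.trunc]
    split_ifs with h1 h2 h2
    · rcases Nat.eq_zero_or_pos (T c) with h0 | h0
      · rcases Nat.eq_zero_or_pos (M c) with hm0 | hm0
        · rw [h0, hm0]
        · have := (key (M c) hm0 h2 c).2 rfl
          omega
      · have := (key (T c) h0 h1 c).1 rfl
        omega
    · by_contra hne
      have h0 : 1 ≤ T c := by omega
      have := (key (T c) h0 h1 c).1 rfl
      omega
    · by_contra hne
      have h0 : 1 ≤ M c := by omega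
      have := (key (M c) h0 h2 c).2 rfl
      omega
    · rfl
  have hbnd : S13.Bnd w (S13.trunc w T) := by
    intro c hc
    obtain ⟨a, b⟩ := c
    have h1 : T (a, b) ≠ 0 ∧ T (a, b) ≤ w := by
      simp only [S13.trunc] at hc
      split_ifs at hc with h
      · exact ⟨hc, h⟩
      · exact absurd rfl hc
    have := S13.cellsum_lt T hTsh1 hTsh2 hTH hTV a b h1.1
    show a + b < w
    omega
  have e1 : S13.trunc w ((jdt (w+1))^[q] T) = (jdt (w+1))^[q] (S13.trunc w T) :=
    S13.iter_trunc w (w+1) q T hTHincr hTVincr hTInj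
  have e2 : (jdt (w+1))^[q] (S13.trunc w T) = (jdt (w+k))^[q] (S13.trunc w T) :=
    S13.iter_fuel w (w+1) (w+k) q (S13.trunc w T) hbnd (by omega) (by omega)
  have e3 : S13.trunc w ((jdt (w+k))^[q] M) = (jdt (w+k))^[q] (S13.trunc w M) :=
    S13.iter_trunc w (w+k) q M hMHincr hMVincr hMInj
  have h1s : 1 ≤ s := by omega
  rw [S13.pos_trunc w ((jdt (w+1))^[q] T) s h1s hsw,
      S13.pos_trunc w ((jdt (w+k))^[q] M) s h1s hsw,
      e1, e2, htr, e3]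
end
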